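/- arXiv:1904.08882 — 6 statements merged into one kernel-verified Lean document; each statement's English description precedes it below -/
import Mathlib

section
/- Let b : ℕ → (0,∞) be completely multiplicative and τ ∈ ℕ. Suppose: (i) for every m ∈ ℕ and every real k > 1 there exists c ∈ ℝ such that b(n+m) ≤ k·b(n) + c for all n ∈ ℕ; and (ii) either b(n) = 1 for all n ∈ ℕ, or for every m ∈ ℕ there exists d > 0 such that max(b(nτ), b(nτ+m)) ≥ d for all n ∈ ℕ. Then exactly one of the following holds: (1) b(n) = 1 for all n ∈ ℕ; (2) there exist a prime p and H > 0 such that b(n) = (|n|_p)^H for all n ∈ ℕ; (3) there exists H > 0 such that b(n) = n^H for all n ∈ ℕ. -/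
open MeasureTheory ProbabilityTheory Filter

noncomputable section

/-- The `p`-adic norm of a natural number, as a real number (`0` for `n = 0`). -/
def padicNormNat (p n : ℕ) : ℝ := ((padicNorm p (n : ℚ) : ℚ) : ℝ)

/-!
If `b ≤ 1` but `b ≢ 1`, some prime `q` has `b q < 1`, and condition (ii) rules out a second
such prime `p`: write `τ = q^v τ₀` with `q ∤ τ₀` and, for `N` large, pick `n = p^N n'` with
`q^N ∣ p^N τ₀ n' + 1`; then `p^N ∣ nτ` and `q^N ∣ nτ + q^v`, so both `b (nτ)` and
`b (nτ + q^v)` are tiny. Hence `b` agrees with a power of the `q`-adic norm on primes.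

If `b n₀ > 1` for some `n₀`, condition (i) applied digit by digit in base `g` gives
`b N ≤ A (log_g N + 1) λ^(log_g N)` with `λ = max (k b(g)) 1`. Taking `N = h^t`, `t → ∞`,
and then `k → 1` yields `b h ≤ max (b g) 1 ^ (log h / log g)`. With `h = n₀` this forces
`b g ≥ 1`, and then exchanging `g` and `h` shows that `log (b n) / log n` is constant.
-/

open Topology

lemma le_one_of_pow_le_linear {ρ a c : ℝ} (h : ∀ t : ℕ, 1 ≤ t → ρ ^ t ≤ a * t + c) :
    ρ ≤ 1 := by
  by_contra! hρ
  have hlim : Tendsto (fun t : ℕ => (a * t + c) / ρ ^ t) atTop (𝓝 0) := by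
    convert ((tendsto_pow_const_div_const_pow_of_one_lt 1 hρ).const_mul a).add
      ((tendsto_pow_const_div_const_pow_of_one_lt 0 hρ).const_mul c) using 2 <;> ring
  obtain ⟨t, ht, hlt⟩ :=
    ((eventually_ge_atTop 1).and (hlim.eventually (gt_mem_nhds one_pos))).exists
  exact (h t ht).not_gt ((div_lt_one (by positivity)).1 hlt)

lemma exists_le_of_digit_step {f : ℕ → ℝ} {g : ℕ} (hg : 2 ≤ g) {lam C : ℝ} (hlam : 1 ≤ lam)
    (hstep : ∀ n r, 1 ≤ n → r < g → f (g * n + r) ≤ lam * f n + C) :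
    ∃ A : ℝ, 0 ≤ A ∧ ∀ N, 1 ≤ N → f N ≤ A * (Nat.log g N + 1) * lam ^ Nat.log g N := by
  set A := |C| + ∑ j ∈ Finset.range g, |f j|
  have hfA : ∀ j < g, f j ≤ A := fun j hj =>
    (le_abs_self _).trans <| (Finset.single_le_sum (fun i _ => abs_nonneg (f i))
      (Finset.mem_range.2 hj)).trans (le_add_of_nonneg_left (abs_nonneg C))
  have hA : 0 ≤ A := by positivity
  have hCA : C ≤ A := (le_abs_self C).trans (le_add_of_nonneg_right (by positivity))
  refine ⟨A, hA, fun N hN => ?_⟩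
  induction N using Nat.strong_induction_on with
  | _ N ih =>
    rcases lt_or_ge N g with hNg | hNg
    · simpa [Nat.log_of_lt hNg] using hfA N hNg
    · have hn : 1 ≤ N / g := (Nat.one_le_div_iff (by omega)).2 hNg
      have hlog : Nat.log g N = Nat.log g (N / g) + 1 := by
        have := Nat.log_pos (by omega) hNg
        rw [Nat.log_div_base]
        omega
      have ihn := ih (N / g) (Nat.div_lt_self (by omega) (by omega)) hn
      have hpow : 1 ≤ lam ^ (Nat.log g (N / g) + 1) := one_le_pow₀ hlam
      calc f N = f (g * (N / g) + N % g) := by rw [Nat.div_add_mod]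
        _ ≤ lam * f (N / g) + C := hstep _ _ hn (Nat.mod_lt _ (by omega))
        _ ≤ lam * (A * (Nat.log g (N / g) + 1) * lam ^ Nat.log g (N / g))
            + A * lam ^ (Nat.log g (N / g) + 1) := by
          gcongr
          exact hCA.trans (le_mul_of_one_le_right hA hpow)
        _ = A * (Nat.log g N + 1) * lam ^ Nat.log g N := by rw [hlog]; push_cast; ring

lemma logb_le_logb_of_le_rpow {x y u v : ℝ} (hu : 1 < u) (hv : 1 < v) (hx : 0 < x) (hy : 0 < y)
    (h : x ≤ y ^ (Real.log u / Real.log v)) : Real.logb u x ≤ Real.logb v y := by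
  have hlogu := Real.log_pos hu
  have hlogv := Real.log_pos hv
  have hlog := Real.log_le_log hx h
  rw [Real.log_rpow hy, div_mul_eq_mul_div, le_div_iff₀ hlogv] at hlog
  rw [Real.logb, Real.logb, div_le_div_iff₀ hlogu hlogv]
  linarith

lemma exists_dvd_mul_add_one {a Q : ℕ} [NeZero Q] (h : a.Coprime Q) :
    ∃ n, 1 ≤ n ∧ Q ∣ a * n + 1 := by
  refine ⟨(-(a : ZMod Q)⁻¹).val + Q, by have := NeZero.pos Q; omega, ?_⟩
  rw [← ZMod.natCast_eq_zero_iff]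
  push_cast
  rw [ZMod.natCast_self, ZMod.natCast_zmod_val, add_zero, mul_neg, ZMod.coe_mul_inv_eq_one a h,
    neg_add_cancel]

lemma padicNormNat_nonneg (p n : ℕ) : 0 ≤ padicNormNat p n :=
  Rat.cast_nonneg.2 (padicNorm.nonneg _)

lemma padicNormNat_self_rpow_lt_one {p : ℕ} (hp : p.Prime) {H : ℝ} (hH : 0 < H) :
    padicNormNat p p ^ H < 1 := by
  have := Fact.mk hp
  rw [padicNormNat, padicNorm.padicNorm_p_of_prime, Rat.cast_inv, Rat.cast_natCast]
  exact Real.rpow_lt_one (by positivity) (inv_lt_one_of_one_lt₀ (by exact_mod_cast hp.one_lt)) hH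

structure IsPosCompletelyMultiplicative (b : ℕ → ℝ) : Prop where
  pos : ∀ n : ℕ, 1 ≤ n → 0 < b n
  map_mul : ∀ m n : ℕ, 1 ≤ m → 1 ≤ n → b (m * n) = b m * b n

def IsShiftBounded (b : ℕ → ℝ) : Prop :=
  ∀ m : ℕ, 1 ≤ m → ∀ k : ℝ, 1 < k → ∃ c : ℝ, ∀ n : ℕ, 1 ≤ n → b (n + m) ≤ k * b n + c

def IsShiftBoundedBelow (b : ℕ → ℝ) (τ : ℕ) : Prop :=
  ∀ m : ℕ, 1 ≤ m → ∃ d : ℝ, 0 < d ∧ ∀ n : ℕ, 1 ≤ n → d ≤ max (b (n * τ)) (b (n * τ + m))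

lemma isPosCompletelyMultiplicative_one : IsPosCompletelyMultiplicative fun _ => 1 :=
  ⟨fun _ _ => one_pos, fun _ _ _ _ => (mul_one 1).symm⟩

lemma isPosCompletelyMultiplicative_padicNormNat_rpow (p : ℕ) [Fact p.Prime] (H : ℝ) :
    IsPosCompletelyMultiplicative fun n => padicNormNat p n ^ H where
  pos n hn := by
    have : padicNorm p (n : ℚ) ≠ 0 := padicNorm.nonzero (by exact_mod_cast (by omega : n ≠ 0))
    exact Real.rpow_pos_of_pos (Rat.cast_pos.2 ((padicNorm.nonneg _).lt_of_ne' this)) H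
  map_mul m n _ _ := by
    simp only [padicNormNat, Nat.cast_mul, padicNorm.mul, Rat.cast_mul]
    exact Real.mul_rpow (padicNormNat_nonneg p m) (padicNormNat_nonneg p n)

namespace IsPosCompletelyMultiplicative

variable {b : ℕ → ℝ}

lemma map_one (hb : IsPosCompletelyMultiplicative b) : b 1 = 1 := by
  have h := hb.map_mul 1 1 le_rfl le_rfl
  have := hb.pos 1 le_rfl
  rw [mul_one] at h
  nlinarith

lemma map_pow (hb : IsPosCompletelyMultiplicative b) {a : ℕ} (ha : 1 ≤ a) (t : ℕ) :
    b (a ^ t) = b a ^ t := by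
  induction t with
  | zero => simpa using hb.map_one
  | succ t ih => rw [pow_succ, hb.map_mul _ _ (Nat.one_le_pow _ _ ha) ha, ih, pow_succ]

lemma two_le_of_one_lt (hb : IsPosCompletelyMultiplicative b) {n : ℕ} (hn : 1 ≤ n) (hbn : 1 < b n) :
    2 ≤ n := by
  rcases hn.eq_or_lt with rfl | hn
  · exact absurd hb.map_one hbn.ne'
  · exact hn

lemma eq_of_eq_on_primes {c : ℕ → ℝ} (hb : IsPosCompletelyMultiplicative b)
    (hc : IsPosCompletelyMultiplicative c) (h : ∀ p, p.Prime → b p = c p) :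
    ∀ n, 1 ≤ n → b n = c n := by
  intro n
  induction n using Nat.recOnMul with
  | zero => intro h0; omega
  | one => intro; rw [hb.map_one, hc.map_one]
  | prime p hp => intro; exact h p hp
  | mul m n hm hn =>
    intro hmn
    have hm1 : 1 ≤ m := Nat.pos_of_mul_pos_right hmn
    have hn1 : 1 ≤ n := Nat.pos_of_mul_pos_left hmn
    rw [hb.map_mul m n hm1 hn1, hc.map_mul m n hm1 hn1, hm hm1, hn hn1]

lemma le_of_dvd (hb : IsPosCompletelyMultiplicative b) (hle : ∀ n, 1 ≤ n → b n ≤ 1) {a x : ℕ}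
    (hx : 1 ≤ x) (hax : a ∣ x) : b x ≤ b a := by
  obtain ⟨y, rfl⟩ := hax
  have ha : 1 ≤ a := Nat.pos_of_mul_pos_right hx
  have hy : 1 ≤ y := Nat.pos_of_mul_pos_left hx
  rw [hb.map_mul a y ha hy]
  exact mul_le_of_le_one_right (hb.pos a ha).le (hle y hy)

lemma prime_eq_of_lt_one (hb : IsPosCompletelyMultiplicative b) (hle : ∀ n, 1 ≤ n → b n ≤ 1) {τ : ℕ}
    (hτ : 1 ≤ τ) (hsep : IsShiftBoundedBelow b τ) {p q : ℕ} (hp : p.Prime) (hq : q.Prime)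
    (hbp : b p < 1) (hbq : b q < 1) : p = q := by
  by_contra hpq
  set v := τ.factorization q
  set τ₀ := τ / q ^ v
  have hτv : τ = q ^ v * τ₀ := (Nat.ordProj_mul_ordCompl_eq_self τ q).symm
  have hτ₀ : ¬ q ∣ τ₀ := Nat.not_dvd_ordCompl hq (by omega)
  obtain ⟨d, hd, hsep⟩ := hsep (q ^ v) (Nat.one_le_pow _ _ hq.pos)
  have hsmall : ∀ r, r.Prime → b r < 1 → ∀ᶠ N in atTop, b r ^ N < d := fun r hr hbr =>
    (tendsto_pow_atTop_nhds_zero_of_lt_one (hb.pos r hr.pos).le hbr).eventually (gt_mem_nhds hd)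
  obtain ⟨N, hNp, hNq⟩ := ((hsmall p hp hbp).and (hsmall q hq hbq)).exists
  have hcop : (p ^ N * τ₀).Coprime (q ^ N) :=
    Nat.Coprime.mul_left (((Nat.coprime_primes hp hq).2 hpq).pow N N)
      ((hq.coprime_iff_not_dvd.2 hτ₀).symm.pow_right N)
  have : NeZero (q ^ N) := ⟨pow_ne_zero N hq.ne_zero⟩
  obtain ⟨n, hn, hdvd⟩ := exists_dvd_mul_add_one hcop
  have hpn : 1 ≤ p ^ N * n := Nat.mul_pos (Nat.one_le_pow _ _ hp.pos) hn
  have hshift : p ^ N * n * τ + q ^ v = q ^ v * (p ^ N * τ₀ * n + 1) := by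
    nth_rw 1 [hτv]
    ring
  have h₁ : b (p ^ N * n * τ) < d := by
    refine lt_of_le_of_lt ?_ hNp
    rw [← hb.map_pow hp.pos]
    exact hb.le_of_dvd hle (Nat.mul_pos hpn hτ) (dvd_mul_of_dvd_left (dvd_mul_right _ _) _)
  have h₂ : b (p ^ N * n * τ + q ^ v) < d := by
    refine lt_of_le_of_lt ?_ hNq
    rw [← hb.map_pow hq.pos]
    exact hb.le_of_dvd hle ((Nat.one_le_pow _ _ hq.pos).trans (Nat.le_add_left _ _))
      (hshift ▸ dvd_mul_of_dvd_right hdvd _)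
  exact (hsep _ hpn).not_gt (max_lt h₁ h₂)

lemma exists_eq_padicNormNat_rpow (hb : IsPosCompletelyMultiplicative b)
    (hle : ∀ n, 1 ≤ n → b n ≤ 1) {τ : ℕ} (hτ : 1 ≤ τ) (hsep : IsShiftBoundedBelow b τ)
    (hne : ¬ ∀ n, 1 ≤ n → b n = 1) :
    ∃ q : ℕ, q.Prime ∧ ∃ H : ℝ, 0 < H ∧ ∀ n : ℕ, 1 ≤ n → b n = padicNormNat q n ^ H := by
  obtain ⟨q, hq, hbq⟩ : ∃ q, q.Prime ∧ b q < 1 := by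
    by_contra! h
    exact hne (hb.eq_of_eq_on_primes isPosCompletelyMultiplicative_one fun p hp =>
      le_antisymm (hle p hp.pos) (h p hp))
  have := Fact.mk hq
  have hq₀ : (0 : ℝ) < (q : ℝ)⁻¹ := inv_pos.2 (Nat.cast_pos.2 hq.pos)
  have hq₁ : (q : ℝ)⁻¹ < 1 := inv_lt_one_of_one_lt₀ (by exact_mod_cast hq.one_lt)
  refine ⟨q, hq, Real.logb (q : ℝ)⁻¹ (b q),
    Real.logb_pos_of_base_lt_one hq₀ hq₁ (hb.pos q hq.pos) hbq,
    hb.eq_of_eq_on_primes (isPosCompletelyMultiplicative_padicNormNat_rpow q _) fun p hp => ?_⟩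
  have := Fact.mk hp
  rcases eq_or_ne q p with rfl | hqp
  · rw [padicNormNat, padicNorm.padicNorm_p_of_prime, Rat.cast_inv, Rat.cast_natCast,
      Real.rpow_logb hq₀ hq₁.ne (hb.pos q hq.pos)]
  · rw [padicNormNat, padicNorm.padicNorm_of_prime_of_ne hqp, Rat.cast_one, Real.one_rpow]
    exact le_antisymm (hle p hp.pos) (not_lt.1 fun hbp =>
      hqp (hb.prime_eq_of_lt_one hle hτ hsep hq hp hbq hbp))

lemma exists_digit_step (hb : IsPosCompletelyMultiplicative b) (hshift : IsShiftBounded b) {g : ℕ}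
    (hg : 2 ≤ g) {k : ℝ} (hk : 1 < k) :
    ∃ C : ℝ, ∀ n r, 1 ≤ n → r < g → b (g * n + r) ≤ max (k * b g) 1 * b n + C := by
  have hr : ∀ r, ∀ᶠ C in atTop, ∀ n, 1 ≤ n → b (n + r) ≤ k * b n + C := by
    rintro (_ | r)
    · refine (eventually_ge_atTop 0).mono fun C hC n hn => ?_
      have := hb.pos n hn
      rw [add_zero]
      nlinarith
    · obtain ⟨c, hc⟩ := hshift (r + 1) (by omega) k hk
      exact (eventually_ge_atTop c).mono fun C hC n hn => (hc n hn).trans (by linarith)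
  obtain ⟨C, hC⟩ := ((eventually_all_finset (Finset.range g)).2 fun r _ => hr r).exists
  refine ⟨C, fun n r hn hrg => ?_⟩
  calc b (g * n + r) ≤ k * b (g * n) + C :=
        hC r (Finset.mem_range.2 hrg) _ (Nat.mul_pos (by omega) hn)
    _ = k * b g * b n + C := by rw [hb.map_mul g n (by omega) hn, mul_assoc]
    _ ≤ max (k * b g) 1 * b n + C := by
      gcongr
      · exact (hb.pos n hn).le
      · exact le_max_left _ _

lemma le_max_mul_rpow (hb : IsPosCompletelyMultiplicative b) (hshift : IsShiftBounded b) {g h : ℕ}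
    (hg : 2 ≤ g) (hh : 2 ≤ h) {k : ℝ} (hk : 1 < k) :
    b h ≤ max (k * b g) 1 ^ (Real.log h / Real.log g) := by
  set lam := max (k * b g) 1
  set M := Real.log h / Real.log g
  have hlam : 1 ≤ lam := le_max_right _ _
  have hlogg : 0 < Real.log g := Real.log_pos (by exact_mod_cast hg)
  obtain ⟨C, hC⟩ := hb.exists_digit_step hshift hg hk
  obtain ⟨A, hA, hAN⟩ := exists_le_of_digit_step hg hlam hC
  have hlamM : 0 < lam ^ M := by positivity
  suffices b h / lam ^ M ≤ 1 by rwa [div_le_one hlamM] at this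
  refine le_one_of_pow_le_linear (a := A * M) (c := A) fun t ht => ?_
  set L := Nat.log g (h ^ t)
  have hL : (L : ℝ) ≤ t * M := by
    have hpow : (g : ℝ) ^ L ≤ (h : ℝ) ^ t := by
      exact_mod_cast Nat.pow_log_le_self g (by positivity)
    have := Real.log_le_log (by positivity) hpow
    rw [Real.log_pow, Real.log_pow, ← le_div_iff₀ hlogg] at this
    rwa [mul_div_assoc] at this
  calc (b h / lam ^ M) ^ t = b (h ^ t) / (lam ^ M) ^ t := by
        rw [div_pow, hb.map_pow (by omega)]
    _ ≤ A * (L + 1) * lam ^ L / (lam ^ M) ^ t := by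
      gcongr
      exact hAN _ (Nat.one_le_pow _ _ (by omega))
    _ ≤ A * (t * M + 1) * (lam ^ M) ^ t / (lam ^ M) ^ t := by
      rw [← Real.rpow_mul_natCast (by positivity), ← Real.rpow_natCast]
      gcongr
      linarith
    _ = A * M * t + A := by field_simp

lemma le_max_rpow (hb : IsPosCompletelyMultiplicative b) (hshift : IsShiftBounded b) {g h : ℕ}
    (hg : 2 ≤ g) (hh : 2 ≤ h) : b h ≤ max (b g) 1 ^ (Real.log h / Real.log g) := by
  have hM : 0 ≤ Real.log h / Real.log g := by positivity
  have hcont : Continuous fun k : ℝ => max (k * b g) 1 ^ (Real.log h / Real.log g) :=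
    ((continuous_id.mul continuous_const).max continuous_const).rpow_const fun _ => Or.inr hM
  simpa using ge_of_tendsto ((hcont.tendsto 1).mono_left (nhdsWithin_le_nhds (s := Set.Ioi 1)))
    (eventually_nhdsWithin_of_forall fun k hk => hb.le_max_mul_rpow hshift hg hh hk)

lemma one_le_of_one_lt (hb : IsPosCompletelyMultiplicative b) (hshift : IsShiftBounded b) {n₀ : ℕ}
    (hn₀ : 1 ≤ n₀) (hbn₀ : 1 < b n₀) {g : ℕ} (hg : 2 ≤ g) : 1 ≤ b g := by
  by_contra! hlt
  have := hb.le_max_rpow hshift hg (hb.two_le_of_one_lt hn₀ hbn₀)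
  rw [max_eq_right hlt.le, Real.one_rpow] at this
  linarith

lemma exists_eq_rpow (hb : IsPosCompletelyMultiplicative b) (hshift : IsShiftBounded b) {n₀ : ℕ}
    (hn₀ : 1 ≤ n₀) (hbn₀ : 1 < b n₀) :
    ∃ H : ℝ, 0 < H ∧ ∀ n : ℕ, 1 ≤ n → b n = (n : ℝ) ^ H := by
  have hlogb : ∀ g h : ℕ, 2 ≤ g → 2 ≤ h → Real.logb h (b h) ≤ Real.logb g (b g) := by
    intro g h hg hh
    have := hb.le_max_rpow hshift hg hh
    rw [max_eq_left (hb.one_le_of_one_lt hshift hn₀ hbn₀ hg)] at this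
    exact logb_le_logb_of_le_rpow (by exact_mod_cast hh) (by exact_mod_cast hg)
      (hb.pos h (by omega)) (hb.pos g (by omega)) this
  have hconst : ∀ n : ℕ, 2 ≤ n → Real.logb n (b n) = Real.logb 2 (b 2) := fun n hn => by
    exact_mod_cast le_antisymm (hlogb 2 n le_rfl hn) (hlogb n 2 hn le_rfl)
  have hn₀2 := hb.two_le_of_one_lt hn₀ hbn₀
  refine ⟨Real.logb 2 (b 2), ?_, fun n hn => ?_⟩
  · rw [← hconst n₀ hn₀2]
    exact Real.logb_pos (by exact_mod_cast hn₀2) hbn₀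
  rcases hn.eq_or_lt with rfl | hn2
  · simp [hb.map_one]
  · rw [← hconst n hn2, Real.rpow_logb (by positivity) (by exact_mod_cast hn2.ne') (hb.pos n hn)]

end IsPosCompletelyMultiplicative

/-- Purely arithmetic form of the classification theorem: a completely multiplicative
function satisfying the two growth conditions is of exactly one of the three types. -/
theorem stmt2 (b : ℕ → ℝ) (hbpos : ∀ n : ℕ, 1 ≤ n → 0 < b n)
    (hmul : ∀ m n : ℕ, 1 ≤ m → 1 ≤ n → b (m * n) = b m * b n)
    (τ : ℕ) (hτ : 1 ≤ τ)
    (h1 : ∀ m : ℕ, 1 ≤ m → ∀ k : ℝ, 1 < k → ∃ c : ℝ, ∀ n : ℕ, 1 ≤ n →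
      b (n + m) ≤ k * b n + c)
    (h2 : (∀ n : ℕ, 1 ≤ n → b n = 1) ∨
      (∀ m : ℕ, 1 ≤ m → ∃ d : ℝ, 0 < d ∧ ∀ n : ℕ, 1 ≤ n →
        d ≤ max (b (n * τ)) (b (n * τ + m)))) :
    ((∀ n : ℕ, 1 ≤ n → b n = 1) ∧
      ¬ (∃ p : ℕ, p.Prime ∧ ∃ H : ℝ, 0 < H ∧ ∀ n : ℕ, 1 ≤ n →
          b n = (padicNormNat p n) ^ H) ∧
      ¬ (∃ H : ℝ, 0 < H ∧ ∀ n : ℕ, 1 ≤ n → b n = (n : ℝ) ^ H)) ∨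
    ((¬ ∀ n : ℕ, 1 ≤ n → b n = 1) ∧
      (∃ p : ℕ, p.Prime ∧ ∃ H : ℝ, 0 < H ∧ ∀ n : ℕ, 1 ≤ n →
          b n = (padicNormNat p n) ^ H) ∧
      ¬ (∃ H : ℝ, 0 < H ∧ ∀ n : ℕ, 1 ≤ n → b n = (n : ℝ) ^ H)) ∨
    ((¬ ∀ n : ℕ, 1 ≤ n → b n = 1) ∧
      ¬ (∃ p : ℕ, p.Prime ∧ ∃ H : ℝ, 0 < H ∧ ∀ n : ℕ, 1 ≤ n →
          b n = (padicNormNat p n) ^ H) ∧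
      (∃ H : ℝ, 0 < H ∧ ∀ n : ℕ, 1 ≤ n → b n = (n : ℝ) ^ H)) := by
  have hb : IsPosCompletelyMultiplicative b := ⟨hbpos, hmul⟩
  have hpadic : ∀ p, p.Prime → ∀ H : ℝ, 0 < H →
      (∀ n : ℕ, 1 ≤ n → b n = padicNormNat p n ^ H) → b p < 1 :=
    fun p hp H hH h => h p hp.pos ▸ padicNormNat_self_rpow_lt_one hp hH
  have hpow : ∀ H : ℝ, 0 < H → (∀ n : ℕ, 1 ≤ n → b n = (n : ℝ) ^ H) → ∀ p : ℕ, 2 ≤ p → 1 < b p :=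
    fun H hH h p hp => h p (by omega) ▸ Real.one_lt_rpow (by exact_mod_cast hp) hH
  by_cases hone : ∀ n : ℕ, 1 ≤ n → b n = 1
  · refine Or.inl ⟨hone, fun ⟨p, hp, H, hH, h⟩ => ?_, fun ⟨H, hH, h⟩ => ?_⟩
    · exact (hpadic p hp H hH h).ne (hone p hp.pos)
    · exact (hpow H hH h 2 le_rfl).ne' (hone 2 (by norm_num))
  by_cases hbig : ∃ n₀, 1 ≤ n₀ ∧ 1 < b n₀
  · obtain ⟨n₀, hn₀, hbn₀⟩ := hbig
    obtain ⟨H, hH, h⟩ := hb.exists_eq_rpow h1 hn₀ hbn₀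
    refine Or.inr (Or.inr ⟨hone, fun ⟨p, hp, H', hH', h'⟩ => ?_, H, hH, h⟩)
    exact (hpadic p hp H' hH' h').not_gt (hpow H hH h p hp.two_le)
  · push Not at hbig
    obtain ⟨p, hp, H, hH, h⟩ := hb.exists_eq_padicNormNat_rpow hbig hτ (h2.resolve_left hone) hone
    refine Or.inr (Or.inl ⟨hone, ⟨p, hp, H, hH, h⟩, fun ⟨H', hH', h'⟩ => ?_⟩)
    exact (hpadic p hp H hH h).not_gt (hpow H' hH' h' p hp.two_le)
end
end

section
/- Let G₁, G₂, G₃ be Borel probability measures on ℝ with G₁({0}) < 1. Then there exist real constants k₂, k₃ such that for all a₁, a₂, a₃ ≥ 0 with a₁ > k₂·a₂ + k₃·a₃, there do not exist a probability space and random variables Y₁, Y₂, Y₃ on it with Y₁ + Y₂ + Y₃ = 0 almost surely and with the law of Y_i equal to the pushforward of G_i under the map x ↦ a_i·x, for i = 1, 2, 3. -/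
/-!
Pick `δ > 0` with `ε := G₁ {|x| > δ} > 0`, and `c₂, c₃ ≥ 0` with `Gᵢ {|x| > cᵢ} < ε / 2`; take
`kᵢ = cᵢ / δ`. If `Y₁ + Y₂ + Y₃ = 0`, then `|Y₁| ≤ |Y₂| + |Y₃|`, so the event `|Y₁| > a₁ δ`, of
probability `ε`, is covered up to a null set by `|Y₂| > a₂ c₂` and `|Y₃| > a₃ c₃`, whose
probabilities add up to less than `ε` once `a₁ δ > a₂ c₂ + a₃ c₃`.
-/

open MeasureTheory Filter

section Tails

variable {E : Type*} [NormedAddCommGroup E] [MeasurableSpace E]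

lemma exists_measure_norm_gt_lt [CompleteSpace E] [SecondCountableTopology E] [BorelSpace E]
    (μ : Measure E) [IsFiniteMeasure μ] {ε : ENNReal} (hε : 0 < ε) :
    ∃ r, 0 ≤ r ∧ μ {x | r < ‖x‖} < ε := by
  have h := tendsto_measure_norm_gt_of_isTightMeasureSet (isTightMeasureSet_singleton (μ := μ))
  simp only [Set.mem_singleton_iff, iSup_iSup_eq_left] at h
  exact ((eventually_ge_atTop 0).and (h.eventually (gt_mem_nhds hε))).exists

lemma exists_pos_measure_norm_gt_ne_zero {μ : Measure E} (hμ : μ {0}ᶜ ≠ 0) :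
    ∃ δ, 0 < δ ∧ μ {x | δ < ‖x‖} ≠ 0 := by
  have hcover : ({0}ᶜ : Set E) ⊆ ⋃ n : ℕ, {x | 1 / ((n : ℝ) + 1) < ‖x‖} := fun x hx =>
    Set.mem_iUnion.mpr (exists_nat_one_div_lt (norm_pos_iff.mpr hx))
  obtain ⟨n, hn⟩ := exists_measure_pos_of_not_measure_iUnion_null
    fun h => hμ (measure_mono_null hcover h)
  exact ⟨_, Nat.one_div_pos_of_nat, hn.ne'⟩

end Tails

section Scaling

variable {Ω E : Type*} [MeasurableSpace Ω] [NormedAddCommGroup E] [NormedSpace ℝ E]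
  [MeasurableSpace E] [BorelSpace E] {P : Measure Ω} {G : Measure E} {Y : Ω → E} {a : ℝ}

lemma measure_norm_gt_of_map_eq_smul (hY : Measurable Y) (hmap : P.map Y = G.map (a • ·))
    (ha : 0 ≤ a) (r : ℝ) :
    P {ω | a * r < ‖Y ω‖} = G {x | a * r < a * ‖x‖} := by
  have hs : MeasurableSet {y : E | a * r < ‖y‖} := measurableSet_lt measurable_const measurable_norm
  change P (Y ⁻¹' {y | a * r < ‖y‖}) = _
  rw [← Measure.map_apply hY hs, hmap, Measure.map_apply (measurable_const_smul a) hs]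
  simp only [Set.preimage_ofPred_eq, norm_smul, Real.norm_of_nonneg ha]

lemma measure_norm_gt_le_of_map_eq_smul (hY : Measurable Y) (hmap : P.map Y = G.map (a • ·))
    (ha : 0 ≤ a) (r : ℝ) :
    P {ω | a * r < ‖Y ω‖} ≤ G {x | r < ‖x‖} := by
  rw [measure_norm_gt_of_map_eq_smul hY hmap ha]
  exact measure_mono fun x hx => lt_of_mul_lt_mul_left hx ha

lemma measure_norm_gt_eq_of_map_eq_smul (hY : Measurable Y) (hmap : P.map Y = G.map (a • ·))
    (ha : 0 < a) (r : ℝ) :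
    P {ω | a * r < ‖Y ω‖} = G {x | r < ‖x‖} := by
  simp only [measure_norm_gt_of_map_eq_smul hY hmap ha.le, mul_lt_mul_iff_right₀ ha]

end Scaling

lemma measure_norm_gt_add_le {Ω E : Type*} [MeasurableSpace Ω] [NormedAddCommGroup E]
    {P : Measure Ω} {Y₁ Y₂ Y₃ : Ω → E} (hsum : ∀ᵐ ω ∂P, Y₁ ω + Y₂ ω + Y₃ ω = 0) (s t : ℝ) :
    P {ω | s + t < ‖Y₁ ω‖} ≤ P {ω | s < ‖Y₂ ω‖} + P {ω | t < ‖Y₃ ω‖} := by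
  calc P {ω | s + t < ‖Y₁ ω‖} ≤ P ({ω | s < ‖Y₂ ω‖} ∪ {ω | t < ‖Y₃ ω‖}) := by
        refine measure_mono_ae (hsum.mono fun ω hω h₁ => ?_)
        show s < ‖Y₂ ω‖ ∨ t < ‖Y₃ ω‖
        by_contra! h
        have hY₁ : Y₁ ω = -(Y₂ ω + Y₃ ω) := eq_neg_of_add_eq_zero_left (by rwa [← add_assoc])
        have : ‖Y₁ ω‖ ≤ s + t := by
          rw [hY₁, norm_neg]
          exact (norm_add_le _ _).trans (add_le_add h.1 h.2)
        exact (h₁.trans_le this).false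
    _ ≤ _ := measure_union_le _ _

/-- Proposition 2.1: if `G₁` is not concentrated at `0`, there are constants `k₂, k₃` such
that whenever `a₁ > k₂·a₂ + k₃·a₃` (with `a₁, a₂, a₃ ≥ 0`), no random variables `Yᵢ` with
`Yᵢ/aᵢ ∼ Gᵢ` can sum to zero almost surely. -/
theorem stmt3 (G₁ G₂ G₃ : Measure ℝ)
    [IsProbabilityMeasure G₁] [IsProbabilityMeasure G₂] [IsProbabilityMeasure G₃]
    (hG₁ : G₁ {0} < 1) :
    ∃ k₂ k₃ : ℝ, ∀ a₁ a₂ a₃ : ℝ, 0 ≤ a₁ → 0 ≤ a₂ → 0 ≤ a₃ →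
      k₂ * a₂ + k₃ * a₃ < a₁ →
      ¬ ∃ (Ω : Type) (_ : MeasurableSpace Ω) (P : Measure Ω),
          IsProbabilityMeasure P ∧
          ∃ Y₁ Y₂ Y₃ : Ω → ℝ, Measurable Y₁ ∧ Measurable Y₂ ∧ Measurable Y₃ ∧
            (∀ᵐ ω ∂P, Y₁ ω + Y₂ ω + Y₃ ω = 0) ∧
            Measure.map Y₁ P = Measure.map (fun x => a₁ * x) G₁ ∧
            Measure.map Y₂ P = Measure.map (fun x => a₂ * x) G₂ ∧
            Measure.map Y₃ P = Measure.map (fun x => a₃ * x) G₃ := by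
  have hG₁_compl : G₁ {0}ᶜ ≠ 0 := by
    rw [prob_compl_eq_one_sub (measurableSet_singleton 0)]
    exact (tsub_pos_iff_lt.mpr hG₁).ne'
  obtain ⟨δ, hδ, hε⟩ := exists_pos_measure_norm_gt_ne_zero hG₁_compl
  set ε := G₁ {x | δ < ‖x‖}
  obtain ⟨c₂, hc₂, hG₂⟩ := exists_measure_norm_gt_lt G₂ (ENNReal.half_pos hε)
  obtain ⟨c₃, hc₃, hG₃⟩ := exists_measure_norm_gt_lt G₃ (ENNReal.half_pos hε)
  refine ⟨c₂ / δ, c₃ / δ, fun a₁ a₂ a₃ _ ha₂ ha₃ hlt => ?_⟩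
  rintro ⟨Ω, _, P, -, Y₁, Y₂, Y₃, hY₁, hY₂, hY₃, hsum, hmap₁, hmap₂, hmap₃⟩
  have ha₁ : 0 < a₁ := hlt.trans_le' (by positivity)
  have hkey : a₂ * c₂ + a₃ * c₃ < a₁ * δ := by
    rw [div_mul_eq_mul_div, div_mul_eq_mul_div, ← add_div, div_lt_iff₀ hδ] at hlt
    linarith
  have : ε < ε := calc
    ε = P {ω | a₁ * δ < ‖Y₁ ω‖} := (measure_norm_gt_eq_of_map_eq_smul hY₁ hmap₁ ha₁ δ).symm
    _ ≤ P {ω | a₂ * c₂ + a₃ * c₃ < ‖Y₁ ω‖} := measure_mono fun ω h => hkey.trans h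
    _ ≤ P {ω | a₂ * c₂ < ‖Y₂ ω‖} + P {ω | a₃ * c₃ < ‖Y₃ ω‖} := measure_norm_gt_add_le hsum _ _
    _ ≤ G₂ {x | c₂ < ‖x‖} + G₃ {x | c₃ < ‖x‖} :=
      add_le_add (measure_norm_gt_le_of_map_eq_smul hY₂ hmap₂ ha₂ c₂)
        (measure_norm_gt_le_of_map_eq_smul hY₃ hmap₃ ha₃ c₃)
    _ < ε / 2 + ε / 2 := ENNReal.add_lt_add hG₂ hG₃
    _ = ε := ENNReal.add_halves ε
  exact this.false
end

section
/- Let G₁, G₂, G₃ be Borel probability measures on ℝ with G₁({0}) < 1, and suppose that G₁(B) = G₂(−B) for every Borel set B ⊆ ℝ (where −B = {−x : x ∈ B}). Then for every real k₂ > 1 there exists k₃ ∈ ℝ such that for all a₁, a₂, a₃ ≥ 0 with a₁ > k₂·a₂ + k₃·a₃, there do not exist a probability space and random variables Y₁, Y₂, Y₃ on it with Y₁ + Y₂ + Y₃ = 0 almost surely and with the law of Y_i equal to the pushforward of G_i under the map x ↦ a_i·x, for i = 1, 2, 3. -/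
/-!
Write `T_μ(c) = μ {x | c ≤ |x|}`. As `G₁ ≠ δ₀` and tails vanish at infinity, for `1 < r < k₂` there
is `t > 0` with `T_{G₁}(t r) < T_{G₁}(t)`, and `N` with `T_{G₃}(N)` smaller than this gap. Take `k₃`
so that `k₃ a₃ ≤ a₁` forces `a₃ N ≤ (1 - r/k₂) a₁ t`. If `Y₁ + Y₂ + Y₃ = 0`, then `|Y₁| ≥ a₁ t`
forces `|Y₂| ≥ (r/k₂) a₁ t` or `|Y₃| ≥ (1 - r/k₂) a₁ t`; since `G₂` is the reflection of `G₁` it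
has the same tails, and the union bound gives `T_{G₁}(t) ≤ T_{G₁}(t r) + T_{G₃}(N)`.
-/

open MeasureTheory Filter Topology

def tailSet (c : ℝ) : Set ℝ := {x | c ≤ |x|}

lemma measurableSet_tailSet (c : ℝ) : MeasurableSet (tailSet c) :=
  (isClosed_le continuous_const continuous_abs).measurableSet

lemma antitone_tailSet : Antitone tailSet :=
  fun _ _ hcd _ hx => hcd.trans hx

lemma image_neg_tailSet (c : ℝ) : (fun x => -x) '' tailSet c = tailSet c := by
  ext x
  simp [tailSet]

lemma iInter_tailSet : ⋂ c, tailSet c = ∅ :=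
  Set.eq_empty_of_forall_notMem fun x hx => (lt_add_one |x|).not_ge (Set.mem_iInter.1 hx _)

lemma iUnion_tailSet_inv_succ : ⋃ n : ℕ, tailSet (1 / (n + 1)) = {0}ᶜ := by
  ext x
  simp only [Set.mem_iUnion, tailSet, Set.mem_ofPred_eq, Set.mem_compl_iff, Set.mem_singleton_iff]
  refine ⟨fun ⟨n, hn⟩ hx => ?_, fun hx => ?_⟩
  · subst hx
    rw [abs_zero] at hn
    exact Nat.one_div_pos_of_nat.not_ge hn
  · obtain ⟨n, hn⟩ := exists_nat_one_div_lt (abs_pos.2 hx)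
    exact ⟨n, hn.le⟩

lemma tendsto_measure_tailSet_atTop (μ : Measure ℝ) [IsFiniteMeasure μ] :
    Tendsto (fun c => μ (tailSet c)) atTop (𝓝 0) := by
  simpa [iInter_tailSet, Function.comp_def] using tendsto_measure_iInter_atTop (μ := μ)
    (fun c => (measurableSet_tailSet c).nullMeasurableSet) antitone_tailSet ⟨0, measure_ne_top μ _⟩

lemma exists_pos_measure_tailSet {μ : Measure ℝ} (hμ : μ {0}ᶜ ≠ 0) :
    ∃ t > 0, μ (tailSet t) ≠ 0 := by
  by_contra! h
  exact hμ (iUnion_tailSet_inv_succ ▸ measure_iUnion_null fun n => h _ (by positivity))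

lemma exists_measure_tailSet_mul_lt (μ : Measure ℝ) [IsFiniteMeasure μ] (hμ : μ {0}ᶜ ≠ 0)
    {r : ℝ} (hr : 1 < r) : ∃ t > 0, μ (tailSet (t * r)) < μ (tailSet t) := by
  obtain ⟨t₀, ht₀, hμt₀⟩ := exists_pos_measure_tailSet hμ
  by_contra! h
  have hconst : ∀ m : ℕ, μ (tailSet t₀) ≤ μ (tailSet (t₀ * r ^ m)) := by
    intro m
    induction m with
    | zero => simp
    | succ m ih =>
      rw [pow_succ, ← mul_assoc]
      exact ih.trans (h _ (by positivity))
  have hlim := (tendsto_measure_tailSet_atTop μ).comp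
    ((tendsto_pow_atTop_atTop_of_one_lt hr).const_mul_atTop ht₀)
  obtain ⟨m, hm⟩ := (hlim.eventually_lt_const (pos_iff_ne_zero.2 hμt₀)).exists
  exact (hconst m).not_gt hm

lemma map_const_mul_tailSet_mul (μ : Measure ℝ) {a : ℝ} (ha : 0 < a) (u : ℝ) :
    μ.map (a * ·) (tailSet (a * u)) = μ (tailSet u) := by
  rw [Measure.map_apply (measurable_const_mul a) (measurableSet_tailSet _)]
  congr 1
  ext x
  simp [tailSet, abs_mul, abs_of_pos ha, mul_le_mul_iff_right₀ ha]

lemma map_const_mul_tailSet_le (μ : Measure ℝ) {a c u : ℝ} (ha : 0 ≤ a) (hc : 0 < c)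
    (hu : a * u ≤ c) : μ.map (a * ·) (tailSet c) ≤ μ (tailSet u) := by
  rw [Measure.map_apply (measurable_const_mul a) (measurableSet_tailSet _)]
  refine measure_mono fun x hx => ?_
  simp only [tailSet, Set.mem_preimage, Set.mem_ofPred_eq, abs_mul, abs_of_nonneg ha] at hx ⊢
  rcases ha.eq_or_lt with rfl | ha
  · rw [zero_mul] at hx
    linarith
  · exact le_of_mul_le_mul_left (hu.trans hx) ha

lemma map_tailSet_add_le {Ω : Type*} [MeasurableSpace Ω] {P : Measure Ω} {Y₁ Y₂ Y₃ : Ω → ℝ}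
    (h₁ : Measurable Y₁) (h₂ : Measurable Y₂) (h₃ : Measurable Y₃)
    (hsum : ∀ᵐ ω ∂P, Y₁ ω + Y₂ ω + Y₃ ω = 0) (u v : ℝ) :
    P.map Y₁ (tailSet (u + v)) ≤ P.map Y₂ (tailSet u) + P.map Y₃ (tailSet v) := by
  simp only [Measure.map_apply h₁ (measurableSet_tailSet _),
    Measure.map_apply h₂ (measurableSet_tailSet _), Measure.map_apply h₃ (measurableSet_tailSet _)]
  refine (measure_mono_ae ?_).trans (measure_union_le _ _)
  filter_upwards [hsum] with ω hω
  intro (hY₁ : u + v ≤ |Y₁ ω|)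
  show u ≤ |Y₂ ω| ∨ v ≤ |Y₃ ω|
  by_contra! h
  have : |Y₁ ω| ≤ |Y₂ ω| + |Y₃ ω| := by
    rw [show Y₁ ω = -(Y₂ ω + Y₃ ω) by linarith, abs_neg]
    exact abs_add_le _ _
  linarith

lemma exists_tailSet_gap (μ ν : Measure ℝ) [IsFiniteMeasure μ] [IsFiniteMeasure ν]
    (hμ : μ {0}ᶜ ≠ 0) {r : ℝ} (hr : 1 < r) :
    ∃ t > 0, ∃ N ≥ 0, μ (tailSet (t * r)) + ν (tailSet N) < μ (tailSet t) := by
  obtain ⟨t, ht, hdrop⟩ := exists_measure_tailSet_mul_lt μ hμ hr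
  have hlim := (tendsto_measure_tailSet_atTop ν).const_add (μ (tailSet (t * r)))
  rw [add_zero] at hlim
  obtain ⟨N, hN, hN0⟩ := ((hlim.eventually_lt_const hdrop).and (eventually_ge_atTop 0)).exists
  exact ⟨t, ht, N, hN0, hN⟩

theorem stmt4_general (G₁ G₂ G₃ : Measure ℝ)
    [IsProbabilityMeasure G₁] [IsProbabilityMeasure G₃]
    (hG₁ : G₁ {0} < 1)
    (hsym : ∀ B : Set ℝ, MeasurableSet B → G₁ B = G₂ ((fun x => -x) '' B)) :
    ∀ k₂ : ℝ, 1 < k₂ → ∃ k₃ : ℝ, ∀ a₁ a₂ a₃ : ℝ, 0 ≤ a₁ → 0 ≤ a₂ → 0 ≤ a₃ →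
      k₂ * a₂ + k₃ * a₃ < a₁ →
      ¬ ∃ (Ω : Type) (_ : MeasurableSpace Ω) (P : Measure Ω),
          IsProbabilityMeasure P ∧
          ∃ Y₁ Y₂ Y₃ : Ω → ℝ, Measurable Y₁ ∧ Measurable Y₂ ∧ Measurable Y₃ ∧
            (∀ᵐ ω ∂P, Y₁ ω + Y₂ ω + Y₃ ω = 0) ∧
            Measure.map Y₁ P = Measure.map (fun x => a₁ * x) G₁ ∧
            Measure.map Y₂ P = Measure.map (fun x => a₂ * x) G₂ ∧
            Measure.map Y₃ P = Measure.map (fun x => a₃ * x) G₃ := by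
  intro k₂ hk₂
  obtain ⟨r, hr, hrk⟩ := exists_between hk₂
  have hG₁0 : G₁ {0}ᶜ ≠ 0 := by
    rw [Ne, prob_compl_eq_zero_iff (measurableSet_singleton 0)]
    exact hG₁.ne
  obtain ⟨t, ht, N, hN0, hgap⟩ := exists_tailSet_gap G₁ G₃ hG₁0 hr
  set l := r / k₂
  have hl₀ : 0 < l := div_pos (by linarith) (by linarith)
  have hl : 0 < 1 - l := by rw [sub_pos, div_lt_one (by linarith)]; exact hrk
  set k₃ := N / ((1 - l) * t)
  have hk₃ : 0 ≤ k₃ := div_nonneg hN0 (mul_pos hl ht).le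
  refine ⟨k₃, ?_⟩
  rintro a₁ a₂ a₃ - ha₂ ha₃ hlt ⟨Ω, _, P, -, Y₁, Y₂, Y₃, h₁, h₂, h₃, hsum, hL₁, hL₂, hL₃⟩
  have hk₂a₂ : 0 ≤ k₂ * a₂ := mul_nonneg (by linarith) ha₂
  have hk₃a₃ : 0 ≤ k₃ * a₃ := mul_nonneg hk₃ ha₃
  have ha₁ : 0 < a₁ := by linarith
  have key := map_tailSet_add_le h₁ h₂ h₃ hsum (l * (a₁ * t)) ((1 - l) * (a₁ * t))
  rw [hL₁, hL₂, hL₃, ← add_mul, add_sub_cancel, one_mul,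
    map_const_mul_tailSet_mul G₁ ha₁] at key
  have hY₂ : G₂.map (a₂ * ·) (tailSet (l * (a₁ * t))) ≤ G₁ (tailSet (t * r)) := by
    rw [hsym _ (measurableSet_tailSet _), image_neg_tailSet]
    refine map_const_mul_tailSet_le G₂ ha₂ (by positivity) ?_
    calc a₂ * (t * r) = l * (k₂ * a₂) * t := by simp only [l]; field_simp
      _ ≤ l * a₁ * t := by gcongr; linarith
      _ = l * (a₁ * t) := by ring
  have hY₃ : G₃.map (a₃ * ·) (tailSet ((1 - l) * (a₁ * t))) ≤ G₃ (tailSet N) := by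
    refine map_const_mul_tailSet_le G₃ ha₃ (by positivity) ?_
    calc a₃ * N = k₃ * a₃ * ((1 - l) * t) := by simp only [k₃]; field_simp
      _ ≤ a₁ * ((1 - l) * t) := by gcongr; linarith
      _ = (1 - l) * (a₁ * t) := by ring
  exact (key.trans (add_le_add hY₂ hY₃)).not_gt hgap

/-- Proposition 2.2: if moreover `G₁(B) = G₂(-B)` for all Borel `B`, then for every
`k₂ > 1` a suitable `k₃` exists. -/
theorem stmt4 (G₁ G₂ G₃ : Measure ℝ)
    [IsProbabilityMeasure G₁] [IsProbabilityMeasure G₂] [IsProbabilityMeasure G₃]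
    (hG₁ : G₁ {0} < 1)
    (hsym : ∀ B : Set ℝ, MeasurableSet B → G₁ B = G₂ ((fun x => -x) '' B)) :
    ∀ k₂ : ℝ, 1 < k₂ → ∃ k₃ : ℝ, ∀ a₁ a₂ a₃ : ℝ, 0 ≤ a₁ → 0 ≤ a₂ → 0 ≤ a₃ →
      k₂ * a₂ + k₃ * a₃ < a₁ →
      ¬ ∃ (Ω : Type) (_ : MeasurableSpace Ω) (P : Measure Ω),
          IsProbabilityMeasure P ∧
          ∃ Y₁ Y₂ Y₃ : Ω → ℝ, Measurable Y₁ ∧ Measurable Y₂ ∧ Measurable Y₃ ∧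
            (∀ᵐ ω ∂P, Y₁ ω + Y₂ ω + Y₃ ω = 0) ∧
            Measure.map Y₁ P = Measure.map (fun x => a₁ * x) G₁ ∧
            Measure.map Y₂ P = Measure.map (fun x => a₂ * x) G₂ ∧
            Measure.map Y₃ P = Measure.map (fun x => a₃ * x) G₃ :=
  stmt4_general G₁ G₂ G₃ hG₁ hsym
end

section
/- Let τ ∈ ℕ and let X = (X_n)_{n∈ℕ₀} be a discrete-time stochastic process that is marginally self-similar with scaling function b : ℕ → (0,∞) and has marginally cyclostationary increments with period τ, and assume P(X₁ = 0) < 1. Then for every m ∈ ℕ and every real k > 1 there exists c ∈ ℝ such that b(n+m) ≤ k·b(n) + c for all n ∈ ℕ. -/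
/-!
Let `F t = P(|X₁| > t)`. Self-similarity gives `F t = P(|X_{n+m}| > t b(n+m))` and
`F (k t) = P(|X_n| > k t b(n))`. Cyclostationarity leaves only `τ` increment distributions, so one
level `M` bounds every increment outside probability `η / m`, and then `|X_{n+m} - X_n| ≤ m M`
outside probability `η`. If `b(n+m) > k b(n) + m M / a`, this yields `F t ≤ F (k t) + η` for all
`t ≥ a`, hence `F a ≤ F (kʲ a) + j η`. Choosing `a` with `F a > 0` (possible as `P(X₁ = 0) < 1`),
`j` with `F (kʲ a) < F a / 2`, and `η = F a / (2 (j + 1))` gives a contradiction.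
-/

open MeasureTheory ProbabilityTheory Filter Topology

section Tails

variable {Ω Ω' : Type*} [MeasurableSpace Ω] [MeasurableSpace Ω'] {μ : Measure Ω} {ν : Measure Ω'}

theorem tendsto_measureReal_lt_abs_atTop [IsFiniteMeasure μ] {f : Ω → ℝ} (hf : AEMeasurable f μ) :
    Tendsto (fun t : ℝ => μ.real {ω | t < |f ω|}) atTop (𝓝 0) := by
  have hanti : Antitone fun t : ℝ => {ω | t < |f ω|} := fun s t hst ω hω => hst.trans_lt hω
  have hempty : ⋂ t : ℝ, {ω | t < |f ω|} = ∅ :=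
    Set.eq_empty_of_forall_notMem fun ω hω => lt_irrefl |f ω| (Set.mem_iInter.1 hω |f ω|)
  have h := tendsto_measure_iInter_atTop (μ := μ)
    (fun t => nullMeasurableSet_lt aemeasurable_const hf.abs) hanti ⟨0, measure_ne_top _ _⟩
  rw [hempty, measure_empty] at h
  exact (ENNReal.tendsto_toReal ENNReal.zero_ne_top).comp h

theorem exists_pos_measureReal_lt_abs [IsProbabilityMeasure μ] {f : Ω → ℝ}
    (hf : AEMeasurable f μ) (h : μ {ω | f ω = 0} < 1) : ∃ a > 0, 0 < μ.real {ω | a < |f ω|} := by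
  have hne : μ {ω | f ω = 0}ᶜ ≠ 0 := by
    rw [Ne, prob_compl_eq_zero_iff₀ (s := {ω | f ω = 0})
      (hf.nullMeasurable (measurableSet_singleton 0))]
    exact h.ne
  have hU : {ω | f ω = 0}ᶜ = ⋃ n : ℕ, {ω | 1 / ((n : ℝ) + 1) < |f ω|} := by
    ext ω
    simp only [Set.mem_compl_iff, Set.mem_ofPred_eq, Set.mem_iUnion]
    refine ⟨fun hω => exists_nat_one_div_lt (abs_pos.2 hω), fun ⟨n, hn⟩ h0 => ?_⟩
    rw [h0, abs_zero] at hn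
    exact hn.not_gt (by positivity)
  rw [hU, Ne, measure_iUnion_null_iff] at hne
  obtain ⟨n, hn⟩ := not_forall.1 hne
  exact ⟨1 / ((n : ℝ) + 1), by positivity, ENNReal.toReal_pos hn (measure_ne_top _ _)⟩

theorem measureReal_lt_abs_le_add [IsFiniteMeasure μ] (f g : Ω → ℝ) {r s D : ℝ}
    (hr : s + D ≤ r) :
    μ.real {ω | r < |g ω|} ≤ μ.real {ω | s < |f ω|} + μ.real {ω | D < |g ω - f ω|} :=
  calc μ.real {ω | r < |g ω|}
      ≤ μ.real ({ω | s < |f ω|} ∪ {ω | D < |g ω - f ω|}) := by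
        refine measureReal_mono fun ω hω => ?_
        by_contra hω'
        simp only [Set.mem_union, Set.mem_ofPred_eq, not_or, not_lt] at hω hω'
        linarith [abs_sub_abs_le_abs_sub (g ω) (f ω)]
    _ ≤ _ := measureReal_union_le _ _

theorem measureReal_mul_lt_abs_sub_le_sum [IsFiniteMeasure μ] (Y : ℕ → Ω → ℝ) (n : ℕ) (D : ℝ) :
    ∀ m : ℕ, μ.real {ω | m * D < |Y (n + m) ω - Y n ω|} ≤
      ∑ i ∈ Finset.range m, μ.real {ω | D < |Y (n + i + 1) ω - Y (n + i) ω|}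
  | 0 => by simp
  | m + 1 => by
    have h := measureReal_lt_abs_le_add (μ := μ) (fun ω => Y (n + m) ω - Y n ω)
      (fun ω => Y (n + m + 1) ω - Y n ω) (s := m * D) (D := D) (r := ↑(m + 1) * D)
      (by push_cast; ring_nf; rfl)
    simp only [sub_sub_sub_cancel_right] at h
    rw [Finset.sum_range_succ, ← add_assoc]
    linarith [measureReal_mul_lt_abs_sub_le_sum Y n D m]

theorem ProbabilityTheory.IdentDistrib.measureReal_lt_abs_eq {f : Ω → ℝ} {g : Ω' → ℝ}
    (h : IdentDistrib f g μ ν) (t : ℝ) : μ.real {ω | t < |f ω|} = ν.real {ω | t < |g ω|} :=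
  congrArg ENNReal.toReal
    (h.measure_mem_eq (measurableSet_lt measurable_const measurable_abs :
      MeasurableSet {x : ℝ | t < |x|}))

theorem ProbabilityTheory.IdentDistrib.measureReal_mul_lt_abs_eq {f : Ω → ℝ} {g : Ω' → ℝ} {β : ℝ}
    (h : IdentDistrib f (fun ω => β * g ω) μ ν) (hβ : 0 < β) (t : ℝ) :
    μ.real {ω | β * t < |f ω|} = ν.real {ω | t < |g ω|} := by
  simp only [h.measureReal_lt_abs_eq, abs_mul, abs_of_pos hβ, mul_lt_mul_iff_right₀ hβ]

theorem measureReal_lt_abs_le_mul_add [IsFiniteMeasure μ] {f f' g : Ω → ℝ} {β β' a k t D η : ℝ}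
    (hf : IdentDistrib f (fun ω => β * g ω) μ μ) (hf' : IdentDistrib f' (fun ω => β' * g ω) μ μ)
    (hβ : 0 < β) (hβ' : 0 < β') (hgrowth : k * β + D / a ≤ β') (hD : 0 ≤ D) (ha : 0 < a)
    (ht : a ≤ t) (hη : μ.real {ω | D < |f' ω - f ω|} ≤ η) :
    μ.real {ω | t < |g ω|} ≤ μ.real {ω | k * t < |g ω|} + η := by
  have hDt : D ≤ D / a * t := by
    rw [div_mul_eq_mul_div, le_div_iff₀ ha]
    exact mul_le_mul_of_nonneg_left ht hD
  have hr : β * (k * t) + D ≤ β' * t := by nlinarith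
  rw [← hf'.measureReal_mul_lt_abs_eq hβ', ← hf.measureReal_mul_lt_abs_eq hβ]
  linarith [measureReal_lt_abs_le_add (μ := μ) f f' hr]

theorem exists_forall_measureReal_lt_abs_sub_le [IsFiniteMeasure μ] {X : ℕ → Ω → ℝ} {τ : ℕ}
    (hτ : 1 ≤ τ)
    (hcsi : ∀ k m : ℕ, IdentDistrib (fun ω => X (m + 1) ω - X m ω)
      (fun ω => X (m + k * τ + 1) ω - X (m + k * τ) ω) μ μ)
    {ε : ℝ} (hε : 0 < ε) : ∃ M ≥ 0, ∀ r, μ.real {ω | M < |X (r + 1) ω - X r ω|} ≤ ε := by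
  have hev : ∀ᶠ M in atTop,
      0 ≤ M ∧ ∀ r ∈ Finset.range τ, μ.real {ω | M < |X (r + 1) ω - X r ω|} ≤ ε :=
    (eventually_ge_atTop 0).and <| (eventually_all_finset _).2 fun r _ =>
      (tendsto_measureReal_lt_abs_atTop (hcsi 0 r).aemeasurable_fst).eventually_le_const hε
  obtain ⟨M, hM0, hM⟩ := hev.exists
  refine ⟨M, hM0, fun r => ?_⟩
  have h := (hcsi (r / τ) (r % τ)).measureReal_lt_abs_eq M
  rw [Nat.mod_add_div' r τ] at h
  exact h ▸ hM _ (Finset.mem_range.2 (Nat.mod_lt _ hτ))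

end Tails

theorem le_apply_pow_mul_add_of_le_apply_mul_add {F : ℝ → ℝ} {a k η : ℝ} (ha : 0 ≤ a)
    (hk : 1 ≤ k) (h : ∀ t, a ≤ t → F t ≤ F (k * t) + η) : ∀ j : ℕ, F a ≤ F (k ^ j * a) + j * η
  | 0 => by simp
  | j + 1 => by
    have := h (k ^ j * a) (le_mul_of_one_le_left ha (one_le_pow₀ hk))
    rw [pow_succ', mul_assoc]
    push_cast
    linarith [le_apply_pow_mul_add_of_le_apply_mul_add ha hk h j]

theorem stmt5_general {Ω : Type*} [MeasurableSpace Ω] (P : Measure Ω) [IsProbabilityMeasure P]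
    (X : ℕ → Ω → ℝ)
    (b : ℕ → ℝ) (hbpos : ∀ n : ℕ, 1 ≤ n → 0 < b n) (τ : ℕ) (hτ : 1 ≤ τ)
    (hss : ∀ (n : ℕ), 1 ≤ n → ∀ (m : ℕ),
      IdentDistrib (X (n * m)) (fun ω => b n * X m ω) P P)
    (hcsi : ∀ k m : ℕ, IdentDistrib (fun ω => X (m + 1) ω - X m ω)
      (fun ω => X (m + k * τ + 1) ω - X (m + k * τ) ω) P P)
    (hnd : P {ω | X 1 ω = 0} < 1) :
    ∀ m : ℕ, 1 ≤ m → ∀ k : ℝ, 1 < k → ∃ c : ℝ, ∀ n : ℕ, 1 ≤ n →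
      b (n + m) ≤ k * b n + c := by
  intro m hm k hk
  have hscale : ∀ n, 1 ≤ n → IdentDistrib (X n) (fun ω => b n * X 1 ω) P P := fun n hn => by
    simpa using hss n hn 1
  set F : ℝ → ℝ := fun t => P.real {ω | t < |X 1 ω|}
  have hX1 : AEMeasurable (X 1) P := (hscale 1 le_rfl).aemeasurable_fst
  obtain ⟨a, ha, hδ⟩ := exists_pos_measureReal_lt_abs hX1 hnd
  obtain ⟨j, hj⟩ : ∃ j : ℕ, F (k ^ j * a) < F a / 2 :=
    ((tendsto_measureReal_lt_abs_atTop hX1).comp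
      ((tendsto_pow_atTop_atTop_of_one_lt hk).atTop_mul_const ha)).eventually_lt_const
      (half_pos hδ) |>.exists
  set η := F a / (2 * (j + 1))
  obtain ⟨M, hM0, hM⟩ := exists_forall_measureReal_lt_abs_sub_le hτ hcsi
    (ε := η / m) (by positivity)
  refine ⟨m * M / a, fun n hn => ?_⟩
  by_contra! hgrowth
  have hincr : P.real {ω | m * M < |X (n + m) ω - X n ω|} ≤ η :=
    calc _ ≤ ∑ i ∈ Finset.range m, P.real {ω | M < |X (n + i + 1) ω - X (n + i) ω|} :=
          measureReal_mul_lt_abs_sub_le_sum X n M m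
      _ ≤ ∑ _i ∈ Finset.range m, η / m := Finset.sum_le_sum fun i _ => hM (n + i)
      _ = η := by rw [Finset.sum_const, Finset.card_range, nsmul_eq_mul]; field_simp
  have hstep : ∀ t, a ≤ t → F t ≤ F (k * t) + η := fun t ht =>
    measureReal_lt_abs_le_mul_add (hscale n hn) (hscale (n + m) (by omega)) (hbpos n hn)
      (hbpos _ (by omega)) hgrowth.le (by positivity) ha ht hincr
  have hiter := le_apply_pow_mul_add_of_le_apply_mul_add ha.le hk.le hstep j
  have hjη : j * η ≤ F a / 2 :=
    calc j * η ≤ (j + 1) * η := by gcongr; linarith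
      _ = F a / 2 := by simp only [η]; field_simp
  linarith

/-- Corollary 2.3: the scaling function of a marginally self-similar process with
marginally cyclostationary increments grows at most almost-subadditively. -/
theorem stmt5 {Ω : Type*} [MeasurableSpace Ω] (P : Measure Ω) [IsProbabilityMeasure P]
    (X : ℕ → Ω → ℝ) (hXmeas : ∀ n, Measurable (X n))
    (b : ℕ → ℝ) (hbpos : ∀ n : ℕ, 1 ≤ n → 0 < b n) (τ : ℕ) (hτ : 1 ≤ τ)
    (hss : ∀ (n : ℕ), 1 ≤ n → ∀ (m : ℕ),
      IdentDistrib (X (n * m)) (fun ω => b n * X m ω) P P)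
    (hcsi : ∀ k m : ℕ, IdentDistrib (fun ω => X (m + 1) ω - X m ω)
      (fun ω => X (m + k * τ + 1) ω - X (m + k * τ) ω) P P)
    (hnd : P {ω | X 1 ω = 0} < 1) :
    ∀ m : ℕ, 1 ≤ m → ∀ k : ℝ, 1 < k → ∃ c : ℝ, ∀ n : ℕ, 1 ≤ n →
      b (n + m) ≤ k * b n + c :=
  stmt5_general P X b hbpos τ hτ hss hcsi hnd
end

section
/- Let τ ∈ ℕ and let X = (X_n)_{n∈ℕ₀} be a discrete-time stochastic process that is marginally self-similar with scaling function b : ℕ → (0,∞) and has marginally cyclostationary increments with period τ, and assume P(X₁ = 0) < 1 and that b is not identically 1 on ℕ. Then for every m ∈ ℕ there exists d > 0 such that max(b(nτ), b(nτ+m)) ≥ d for all n ∈ ℕ. -/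
/-!
Because `X n ≐ b n • X 1` with `X 1` not a.s. zero, a distributional identity `a • X 1 ≐ c • X 1`
forces `a = c` (the tails of `X 1` cannot be invariant under a dilation); in particular `b` is
completely multiplicative. Cyclostationarity leaves only `τ` increment laws, and comparing tails
gives three facts about `b`: two small consecutive values `b p, b (p + 1)` are equal (the increment
`X (p + 1) - X p` is a.s. zero or has a tail that two small values cannot produce); they never sit
at `p = n τ` (otherwise `X 1 = X 0` a.s., which forces `b ≡ 1`); and `b A ≤ 1` bounds `b (A + 1)`.

If `b (n τ)` and `b (n τ + m)` were both tiny, write `n τ = P g`, `m = M g` with `g = gcd (n τ, m)`,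
pick `x` with `M ∣ x P + 1 = M w`, and note `P (w + x) + 1 = (P + M) w`: this is a pair of small
consecutive values `R, R + 1`. The identity `q (q + 2) + 1 = (q + 1) ^ 2` propagates
`b (R + k) = b R` to all `k`, in particular to `R τ, R τ + 1`, a contradiction.
-/

open MeasureTheory ProbabilityTheory Filter Topology
open scoped ENNReal

noncomputable section

section

variable {Ω : Type*} [MeasurableSpace Ω] {P : Measure Ω}

def tailProb (P : Measure Ω) (Y : Ω → ℝ) (t : ℝ) : ℝ≥0∞ := P {ω | t < |Y ω|}

section tailProb

variable {Y Z : Ω → ℝ}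

lemma tailProb_antitone (Y : Ω → ℝ) : Antitone (tailProb P Y) :=
  fun _ _ hst => measure_mono fun _ hω => hst.trans_lt hω

lemma ProbabilityTheory.IdentDistrib.tailProb_eq (h : IdentDistrib Y Z P P) (t : ℝ) :
    tailProb P Y t = tailProb P Z t :=
  h.measure_mem_eq (s := {x : ℝ | t < |x|}) (measurableSet_lt measurable_const measurable_abs)

lemma tailProb_const_mul {c : ℝ} (hc : 0 < c) (t : ℝ) :
    tailProb P (fun ω => c * Y ω) t = tailProb P Y (t / c) := by
  simp only [tailProb, abs_mul, abs_of_pos hc, div_lt_iff₀' hc]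

lemma tailProb_add_le (s t : ℝ) :
    tailProb P (Y + Z) (s + t) ≤ tailProb P Y s + tailProb P Z t := by
  refine (measure_mono fun ω hω => ?_).trans (measure_union_le _ _)
  by_contra h
  simp only [Set.mem_union, Set.mem_ofPred_eq, not_or, not_lt, Pi.add_apply] at h hω
  linarith [abs_add_le (Y ω) (Z ω)]

lemma tailProb_sub_le (s t : ℝ) :
    tailProb P (Y - Z) (s + t) ≤ tailProb P Y s + tailProb P Z t := by
  refine (measure_mono fun ω hω => ?_).trans (measure_union_le _ _)
  by_contra h
  simp only [Set.mem_union, Set.mem_ofPred_eq, not_or, not_lt, Pi.sub_apply] at h hω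
  linarith [abs_sub (Y ω) (Z ω)]

lemma tendsto_tailProb_atTop [IsFiniteMeasure P] (hY : AEMeasurable Y P) :
    Tendsto (tailProb P Y) atTop (𝓝 0) := by
  have h := tendsto_measure_iInter_atTop (μ := P) (s := fun t : ℝ => {ω | t < |Y ω|})
    (fun _ => hY.nullMeasurableSet_preimage (measurableSet_lt measurable_const measurable_abs))
    (fun _ _ hst _ hω => hst.trans_lt hω) ⟨0, measure_ne_top _ _⟩
  rwa [Set.iInter_eq_empty_iff.2 fun ω => ⟨|Y ω|, fun h => lt_irrefl |Y ω| h⟩, measure_empty] at h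

lemma exists_tailProb_pos (hY : ¬ Y =ᵐ[P] 0) : ∃ t, 0 < t ∧ 0 < tailProb P Y t := by
  contrapose! hY
  refine ae_iff.2 (measure_mono_null (fun ω hω => ?_)
    (measure_iUnion_null fun n : ℕ =>
      nonpos_iff_eq_zero.1 (hY (1 / ((n : ℝ) + 1)) (by positivity))))
  obtain ⟨n, hn⟩ := exists_nat_one_div_lt (abs_pos.2 hω)
  exact Set.mem_iUnion.2 ⟨n, hn⟩

lemma eq_of_identDistrib_const_mul [IsFiniteMeasure P] (hY : AEMeasurable Y P)
    (hY0 : ¬ Y =ᵐ[P] 0) {a c : ℝ} (ha : 0 < a) (hc : 0 < c)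
    (h : IdentDistrib (fun ω => a * Y ω) (fun ω => c * Y ω) P P) : a = c := by
  wlog hac : a < c generalizing a c
  · rcases (not_lt.1 hac).lt_or_eq with hca | hca
    exacts [(this hc ha h.symm hca).symm, hca.symm]
  obtain ⟨t, ht, hpos⟩ := exists_tailProb_pos hY0
  -- the tail function of `Y` is invariant under dilation by `c / a > 1`, hence zero
  have hstep : ∀ s, tailProb P Y (s * (c / a)) = tailProb P Y s := fun s => by
    have := h.tailProb_eq (s * c)
    rwa [tailProb_const_mul ha, tailProb_const_mul hc, mul_div_cancel_right₀ _ hc.ne',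
      mul_div_assoc] at this
  have hiter : ∀ k : ℕ, tailProb P Y (t * (c / a) ^ k) = tailProb P Y t := fun k => by
    induction k with
    | zero => simp
    | succ k ih => rw [pow_succ, ← mul_assoc, hstep, ih]
  have hlim : Tendsto (fun k : ℕ => tailProb P Y (t * (c / a) ^ k)) atTop (𝓝 0) :=
    (tendsto_tailProb_atTop hY).comp
      ((tendsto_pow_atTop_atTop_of_one_lt ((one_lt_div ha).2 hac)).const_mul_atTop ht)
  simp only [hiter] at hlim
  exact (hpos.ne' (tendsto_nhds_unique tendsto_const_nhds hlim)).elim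

end tailProb

def IsMarginallySelfSimilar (P : Measure Ω) (X : ℕ → Ω → ℝ) (b : ℕ → ℝ) : Prop :=
  ∀ n : ℕ, 1 ≤ n → ∀ m : ℕ, IdentDistrib (X (n * m)) (fun ω => b n * X m ω) P P

def HasCyclostationaryIncrements (P : Measure Ω) (X : ℕ → Ω → ℝ) (τ : ℕ) : Prop :=
  ∀ k m : ℕ, IdentDistrib (fun ω => X (m + 1) ω - X m ω)
    (fun ω => X (m + k * τ + 1) ω - X (m + k * τ) ω) P P

lemma HasCyclostationaryIncrements.identDistrib_mod {X : ℕ → Ω → ℝ} {τ : ℕ}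
    (hcsi : HasCyclostationaryIncrements P X τ) (p : ℕ) :
    IdentDistrib (X (p + 1) - X p) (X (p % τ + 1) - X (p % τ)) P P := by
  have h := hcsi (p / τ) (p % τ)
  rw [Nat.mod_add_div'] at h
  exact h.symm

namespace IsMarginallySelfSimilar

variable {X : ℕ → Ω → ℝ} {b : ℕ → ℝ}

lemma identDistrib_one (hss : IsMarginallySelfSimilar P X b) {p : ℕ} (hp : 1 ≤ p) :
    IdentDistrib (X p) (fun ω => b p * X 1 ω) P P := by
  simpa using hss p hp 1

lemma aemeasurable (hss : IsMarginallySelfSimilar P X b) (p : ℕ) : AEMeasurable (X p) P := by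
  simpa using (hss 1 le_rfl p).aemeasurable_fst

lemma tailProb_eq (hss : IsMarginallySelfSimilar P X b) (hbpos : ∀ n, 1 ≤ n → 0 < b n)
    {p : ℕ} (hp : 1 ≤ p) (s : ℝ) : tailProb P (X p) s = tailProb P (X 1) (s / b p) := by
  rw [(hss.identDistrib_one hp).tailProb_eq, tailProb_const_mul (hbpos p hp)]

variable [IsFiniteMeasure P]

lemma map_mul (hss : IsMarginallySelfSimilar P X b) (hbpos : ∀ n, 1 ≤ n → 0 < b n)
    (hX1 : ¬ X 1 =ᵐ[P] 0) {x y : ℕ} (hx : 1 ≤ x) (hy : 1 ≤ y) : b (x * y) = b x * b y := by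
  have hxy : 1 ≤ x * y := Nat.one_le_iff_ne_zero.2 (by positivity)
  refine eq_of_identDistrib_const_mul (hss.aemeasurable 1) hX1 (hbpos _ hxy)
    (mul_pos (hbpos x hx) (hbpos y hy)) ?_
  have h := ((hss.identDistrib_one hxy).symm.trans (hss x hx y)).trans
    ((hss.identDistrib_one hy).comp (measurable_const_mul (b x)))
  simpa [Function.comp_def, mul_assoc] using h

lemma eq_one_of_increment_ae_eq_zero (hss : IsMarginallySelfSimilar P X b)
    (hbpos : ∀ n, 1 ≤ n → 0 < b n) (hX1 : ¬ X 1 =ᵐ[P] 0) (h : X 1 - X 0 =ᵐ[P] 0)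
    {n : ℕ} (hn : 1 ≤ n) : b n = 1 := by
  have h10 := IdentDistrib.of_ae_eq (hss.aemeasurable 1) (eventuallyEq_iff_sub.2 h)
  have h0 : IdentDistrib (X 0) (fun ω => b n * X 0 ω) P P := by simpa using hss n hn 0
  refine (eq_of_identDistrib_const_mul (hss.aemeasurable 1) hX1 one_pos (hbpos n hn) ?_).symm
  simpa [Function.comp_def] using (h10.trans h0).trans (h10.symm.comp (measurable_const_mul (b n)))

lemma succ_eq_of_increment_ae_eq_zero (hss : IsMarginallySelfSimilar P X b)
    (hbpos : ∀ n, 1 ≤ n → 0 < b n) (hX1 : ¬ X 1 =ᵐ[P] 0) {p : ℕ} (hp : 1 ≤ p)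
    (h : X (p + 1) - X p =ᵐ[P] 0) : b (p + 1) = b p :=
  eq_of_identDistrib_const_mul (hss.aemeasurable 1) hX1 (hbpos _ (by omega)) (hbpos p hp)
    ((hss.identDistrib_one (by omega)).symm.trans
      ((IdentDistrib.of_ae_eq (hss.aemeasurable _) (eventuallyEq_iff_sub.2 h)).trans
        (hss.identDistrib_one hp)))

lemma eventually_tailProb_increment_lt (hss : IsMarginallySelfSimilar P X b)
    (hbpos : ∀ n, 1 ≤ n → 0 < b n) {t : ℝ} (ht : 0 < t) {η : ℝ≥0∞} (hη : 0 < η) :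
    ∀ᶠ ε in 𝓝[>] (0 : ℝ), ∀ p, 1 ≤ p → b p < ε → b (p + 1) < ε →
      tailProb P (X (p + 1) - X p) t < η := by
  obtain ⟨K, hK, hK0⟩ := (((tendsto_tailProb_atTop (hss.aemeasurable 1)).eventually
    (gt_mem_nhds (ENNReal.half_pos hη.ne'))).and (eventually_gt_atTop 0)).exists
  filter_upwards [Ioo_mem_nhdsGT (show 0 < t / 2 / K by positivity)] with ε hε p hp hp0 hp1
  have small : ∀ q, 1 ≤ q → b q < ε → tailProb P (X q) (t / 2) < η / 2 := fun q hq hbq => by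
    rw [hss.tailProb_eq hbpos hq]
    refine (tailProb_antitone _ ?_).trans_lt hK
    exact (le_div_comm₀ hK0 (hbpos q hq)).2 (hbq.trans hε.2).le
  calc tailProb P (X (p + 1) - X p) t = tailProb P (X (p + 1) - X p) (t / 2 + t / 2) := by
        rw [add_halves]
    _ ≤ tailProb P (X (p + 1)) (t / 2) + tailProb P (X p) (t / 2) := tailProb_sub_le _ _
    _ < η / 2 + η / 2 := ENNReal.add_lt_add (small _ (by omega) hp1) (small p hp hp0)
    _ = η := ENNReal.add_halves η

variable {τ : ℕ}

lemma eventually_not_small_pair_of_increment (hss : IsMarginallySelfSimilar P X b)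
    (hbpos : ∀ n, 1 ≤ n → 0 < b n) (hcsi : HasCyclostationaryIncrements P X τ) {r : ℕ}
    (hr : ¬ X (r + 1) - X r =ᵐ[P] 0) :
    ∀ᶠ ε in 𝓝[>] (0 : ℝ), ∀ p, 1 ≤ p → p % τ = r → ¬ (b p < ε ∧ b (p + 1) < ε) := by
  obtain ⟨t, ht, hpos⟩ := exists_tailProb_pos hr
  filter_upwards [hss.eventually_tailProb_increment_lt hbpos ht hpos] with ε hε p hp hpr hsmall
  have h := hε p hp hsmall.1 hsmall.2
  rw [(hcsi.identDistrib_mod p).tailProb_eq, hpr] at h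
  exact lt_irrefl _ h

lemma eventually_succ_eq_of_small (hss : IsMarginallySelfSimilar P X b)
    (hbpos : ∀ n, 1 ≤ n → 0 < b n) (hcsi : HasCyclostationaryIncrements P X τ)
    (hX1 : ¬ X 1 =ᵐ[P] 0) (hτ : 1 ≤ τ) :
    ∀ᶠ ε in 𝓝[>] (0 : ℝ), ∀ p, 1 ≤ p → b p < ε → b (p + 1) < ε → b (p + 1) = b p := by
  have hres : ∀ r ∈ Finset.range τ, ∀ᶠ ε in 𝓝[>] (0 : ℝ),
      ∀ p, 1 ≤ p → p % τ = r → b p < ε → b (p + 1) < ε → b (p + 1) = b p := by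
    intro r _
    by_cases hr : X (r + 1) - X r =ᵐ[P] 0
    · refine Eventually.of_forall fun ε p hp hpr _ _ =>
        hss.succ_eq_of_increment_ae_eq_zero hbpos hX1 hp ?_
      rw [← hpr] at hr
      exact (hcsi.identDistrib_mod p).symm.ae_snd (p := fun x => x = 0)
        (measurableSet_singleton 0) hr
    · filter_upwards [eventually_not_small_pair_of_increment hss hbpos hcsi hr]
        with ε hε p hp hpr h0 h1
      exact (hε p hp hpr ⟨h0, h1⟩).elim
  filter_upwards [(eventually_all_finset _).2 hres] with ε hε p hp
  exact hε (p % τ) (Finset.mem_range.2 (Nat.mod_lt _ hτ)) p hp rfl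

lemma eventually_not_small_pair_mul (hss : IsMarginallySelfSimilar P X b)
    (hbpos : ∀ n, 1 ≤ n → 0 < b n) (hcsi : HasCyclostationaryIncrements P X τ)
    (hX1 : ¬ X 1 =ᵐ[P] 0) (hτ : 1 ≤ τ) (hb1 : ¬ ∀ n, 1 ≤ n → b n = 1) :
    ∀ᶠ ε in 𝓝[>] (0 : ℝ), ∀ n, 1 ≤ n → ¬ (b (n * τ) < ε ∧ b (n * τ + 1) < ε) := by
  have h0 : ¬ X (0 + 1) - X 0 =ᵐ[P] 0 := fun h =>
    hb1 fun n hn => hss.eq_one_of_increment_ae_eq_zero hbpos hX1 h hn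
  filter_upwards [eventually_not_small_pair_of_increment hss hbpos hcsi h0] with ε hε n hn
  exact hε (n * τ) (Nat.one_le_iff_ne_zero.2 (by positivity)) (Nat.mul_mod_left n τ)

lemma exists_succ_le_of_le_one (hss : IsMarginallySelfSimilar P X b)
    (hbpos : ∀ n, 1 ≤ n → 0 < b n) (hcsi : HasCyclostationaryIncrements P X τ)
    (hX1 : ¬ X 1 =ᵐ[P] 0) (hτ : 1 ≤ τ) :
    ∃ C, 1 ≤ C ∧ ∀ A, 1 ≤ A → b A ≤ 1 → b (A + 1) ≤ C := by
  obtain ⟨t, ht, hη⟩ := exists_tailProb_pos hX1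
  set η := tailProb P (X 1) t
  have hsmall : ∀ {Y : Ω → ℝ}, AEMeasurable Y P → ∀ᶠ K in atTop, tailProb P Y K < η / 2 :=
    fun hY => (tendsto_tailProb_atTop hY).eventually (gt_mem_nhds (ENNReal.half_pos hη.ne'))
  obtain ⟨K, hK0, hKX, hKD⟩ := ((eventually_gt_atTop 0).and ((hsmall (hss.aemeasurable 1)).and
    ((eventually_all_finset (Finset.range τ)).2 fun r _ =>
      hsmall ((hss.aemeasurable (r + 1)).sub (hss.aemeasurable r))))).exists
  refine ⟨max (2 * K / t) 1, le_max_right _ _, fun A hA hbA => ?_⟩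
  by_contra! hbig
  -- a large `b (A + 1)` forces a heavy tail of `X (A + 1)` at `2 K`, but `X (A + 1)` is the sum
  -- of `X A` and an increment, both with light tails at `K`
  have hlow : η ≤ tailProb P (X (A + 1)) (K + K) := by
    rw [hss.tailProb_eq hbpos (by omega)]
    refine tailProb_antitone _ ((div_le_iff₀ (hbpos _ (by omega))).2 ?_)
    have := (div_lt_iff₀ ht).1 ((le_max_left _ _).trans_lt hbig)
    linarith
  have hup : tailProb P (X (A + 1)) (K + K) < η := calc
    _ = tailProb P (X A + (X (A + 1) - X A)) (K + K) := by rw [add_sub_cancel]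
    _ ≤ tailProb P (X A) K + tailProb P (X (A + 1) - X A) K := tailProb_add_le _ _
    _ < η / 2 + η / 2 := by
      refine ENNReal.add_lt_add ?_ ?_
      · rw [hss.tailProb_eq hbpos hA]
        exact (tailProb_antitone _ (le_div_self hK0.le (hbpos A hA) hbA)).trans_lt hKX
      · rw [(hcsi.identDistrib_mod A).tailProb_eq]
        exact hKD _ (Finset.mem_range.2 (Nat.mod_lt _ hτ))
    _ = η := ENNReal.add_halves η
  exact (hlow.trans_lt hup).false

end IsMarginallySelfSimilar

end

lemma exists_pos_le_dvd_mul_add_one {a n : ℕ} (hn : 0 < n) (h : a.Coprime n) :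
    ∃ x, 0 < x ∧ x ≤ 2 * n ∧ n ∣ x * a + 1 := by
  have : NeZero n := ⟨hn.ne'⟩
  refine ⟨(-(a : ZMod n)⁻¹).val + n, by omega, by linarith [ZMod.val_lt (-(a : ZMod n)⁻¹)], ?_⟩
  rw [← ZMod.natCast_eq_zero_iff]
  push_cast
  rw [ZMod.natCast_zmod_val, ZMod.natCast_self, add_zero, neg_mul, mul_comm,
    ZMod.coe_mul_inv_eq_one a h, neg_add_cancel]

section Multiplicative

variable {b : ℕ → ℝ}

lemma exists_bounds_on_range (hbpos : ∀ n, 1 ≤ n → 0 < b n) (L : ℕ) :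
    ∃ B U, 0 < B ∧ ∀ i, 1 ≤ i → i ≤ L → B ≤ b i ∧ b i ≤ U := by
  have hB : ∀ᶠ B in 𝓝[>] (0 : ℝ), ∀ i ∈ Finset.Icc 1 L, B ≤ b i :=
    (eventually_all_finset _).2 fun i hi =>
      nhdsWithin_le_nhds (eventually_le_nhds (hbpos i (Finset.mem_Icc.1 hi).1))
  obtain ⟨B, hB, hB0⟩ := (hB.and self_mem_nhdsWithin).exists
  obtain ⟨U, hU⟩ := ((Finset.Icc 1 L).image b).exists_le
  exact ⟨B, U, hB0, fun i hi hiL => ⟨hB i (Finset.mem_Icc.2 ⟨hi, hiL⟩),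
    hU _ (Finset.mem_image_of_mem b (Finset.mem_Icc.2 ⟨hi, hiL⟩))⟩⟩

lemma le_div_of_mul_eq_mul_add_one (hbpos : ∀ n, 1 ≤ n → 0 < b n)
    (hmul : ∀ x y, 1 ≤ x → 1 ≤ y → b (x * y) = b x * b y) {C : ℝ}
    (hC : ∀ A, 1 ≤ A → b A ≤ 1 → b (A + 1) ≤ C) {x Q M y : ℕ} (hx : 1 ≤ x) (hQ : 1 ≤ Q)
    (hM : 1 ≤ M) (hxQ : b x * b Q ≤ 1) {B : ℝ} (hB0 : 0 < B) (hBM : B ≤ b M)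
    (hy : M * y = x * Q + 1) : b y ≤ C / B := by
  have hy0 : 1 ≤ y := Nat.pos_of_ne_zero fun h => by rw [h] at hy; omega
  have h := hC (x * Q) (Nat.one_le_iff_ne_zero.2 (by positivity)) (hmul x Q hx hQ ▸ hxQ)
  rw [← hy, hmul M y hM hy0] at h
  rw [le_div_iff₀ hB0]
  nlinarith [hbpos y hy0]

lemma exists_small_pair (hbpos : ∀ n, 1 ≤ n → 0 < b n)
    (hmul : ∀ x y, 1 ≤ x → 1 ≤ y → b (x * y) = b x * b y) {C : ℝ} (hC0 : 0 < C)
    (hC : ∀ A, 1 ≤ A → b A ≤ 1 → b (A + 1) ≤ C) {m : ℕ} (hm : 1 ≤ m) {δ : ℝ} (hδ : 0 < δ) :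
    ∃ d, 0 < d ∧ ∀ N, 1 ≤ N → b N < d → b (N + m) < d →
      ∃ R, 1 ≤ R ∧ b R < δ ∧ b (R + 1) < δ := by
  obtain ⟨B, U, hB0, hBU⟩ := exists_bounds_on_range hbpos (2 * m)
  have hU0 : 0 < U := (hbpos 1 le_rfl).trans_le (hBU 1 le_rfl (by omega)).2
  -- below `e`, `b Q` is so small that `b x * b Q ≤ 1` and `b Q * (C / B) < δ`
  set e := min (1 / U) (δ * B / C)
  refine ⟨B * e, by positivity, fun N hN hbN hbNm => ?_⟩
  obtain ⟨P, M, hco, hNg, hmg⟩ := Nat.exists_coprime N m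
  set g := N.gcd m
  have hg : 0 < g := Nat.gcd_pos_of_pos_right N hm
  have hgm : g ≤ m := Nat.gcd_le_right N hm
  have hP : 0 < P := Nat.pos_of_ne_zero fun h => by rw [h] at hNg; omega
  have hM : 0 < M := Nat.pos_of_ne_zero fun h => by rw [h] at hmg; omega
  have hMm : M ≤ m := hmg ▸ Nat.le_mul_of_pos_right M hg
  obtain ⟨x, hx0, hx2, w, hw⟩ := exists_pos_le_dvd_mul_add_one hM hco
  have hw0 : 0 < w := Nat.pos_of_ne_zero fun h => by rw [h] at hw; omega
  have hsmall : ∀ Q, 1 ≤ Q → b (Q * g) < B * e → b Q < e := fun Q hQ h => by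
    rw [hmul _ _ hQ hg] at h
    nlinarith [(hBU g hg (by omega)).1, hbpos Q hQ]
  have hcof : ∀ Q y, 1 ≤ Q → b Q < e → M * y = x * Q + 1 → b y ≤ C / B := fun Q y hQ hbQ hy => by
    refine le_div_of_mul_eq_mul_add_one hbpos hmul hC hx0 hQ hM ?_ hB0 (hBU M hM (by omega)).1 hy
    have := (lt_div_iff₀ hU0).1 (hbQ.trans_le (min_le_left _ _))
    nlinarith [(hBU x hx0 (by omega)).2, hbpos Q hQ, hbpos x hx0]
  have hprod : ∀ Q y, 1 ≤ Q → 1 ≤ y → b Q < e → b y ≤ C / B → b (Q * y) < δ :=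
    fun Q y hQ hy hbQ hby => by
      rw [hmul _ _ hQ hy]
      calc b Q * b y ≤ b Q * (C / B) := mul_le_mul_of_nonneg_left hby (hbpos Q hQ).le
        _ < δ * B / C * (C / B) :=
          mul_lt_mul_of_pos_right (hbQ.trans_le (min_le_right _ _)) (by positivity)
        _ = δ := by field_simp
  have hbP : b P < e := hsmall P hP (hNg ▸ hbN)
  have hbPM : b (P + M) < e := hsmall (P + M) (by omega) (by rw [add_mul, ← hNg, ← hmg]; exact hbNm)
  refine ⟨P * (w + x), Nat.one_le_iff_ne_zero.2 (by positivity), hprod P (w + x) hP (by omega) hbP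
    (hcof (P + M) (w + x) (by omega) hbPM (by nlinarith [hw])), ?_⟩
  rw [show P * (w + x) + 1 = (P + M) * w by nlinarith [hw]]
  exact hprod (P + M) w (by omega) hw0 hbPM (hcof P w hP hbP hw.symm)

lemma eq_of_small_pair_add (hbpos : ∀ n, 1 ≤ n → 0 < b n)
    (hmul : ∀ x y, 1 ≤ x → 1 ≤ y → b (x * y) = b x * b y) {ε C : ℝ}
    (hε : ∀ p, 1 ≤ p → b p < ε → b (p + 1) < ε → b (p + 1) = b p) (hε1 : ε ≤ 1) (hC1 : 1 ≤ C)
    (hC : ∀ A, 1 ≤ A → b A ≤ 1 → b (A + 1) ≤ C) {R : ℕ} (hR : 1 ≤ R) (hRε : b R < ε / C)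
    (hR1 : b (R + 1) = b R) (k : ℕ) : b (R + k) = b R ∧ b (R + k + 1) = b R := by
  have hRC : b R * C < ε := (lt_div_iff₀ (by positivity)).1 hRε
  have hβ : b R < ε := (le_mul_of_one_le_right (hbpos R hR).le hC1).trans_lt hRC
  induction k with
  | zero => exact ⟨rfl, hR1⟩
  | succ k ih =>
    obtain ⟨h0, h1⟩ := ih
    refine ⟨h1, ?_⟩
    set q := R + k
    show b (q + 2) = b R
    have hq2 : b (q + 2) ≤ C := hC (q + 1) (by omega) (h1 ▸ hβ.le.trans hε1)
    -- `q (q + 2) + 1 = (q + 1) ^ 2`, so `q (q + 2)` and its successor are a small pair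
    have hlo : b (q * (q + 2)) = b R * b (q + 2) := by
      rw [hmul _ _ (by omega) (by omega), h0]
    have hhi : b (q * (q + 2) + 1) = b R * b R := by
      rw [show q * (q + 2) + 1 = (q + 1) * (q + 1) by ring, hmul _ _ (by omega) (by omega), h1]
    have heq := hε (q * (q + 2)) (Nat.one_le_iff_ne_zero.2 (by positivity))
      (hlo ▸ (mul_le_mul_of_nonneg_left hq2 (hbpos R hR).le).trans_lt hRC)
      (hhi ▸ (mul_le_of_le_one_right (hbpos R hR).le (hβ.le.trans hε1)).trans_lt hβ)
    rw [hhi, hlo] at heq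
    exact (mul_left_cancel₀ (hbpos R hR).ne' heq).symm

lemma div_le_max_succ (hbpos : ∀ n, 1 ≤ n → 0 < b n)
    (hmul : ∀ x y, 1 ≤ x → 1 ≤ y → b (x * y) = b x * b y) {τ : ℕ} (hτ : 1 ≤ τ) {ε C : ℝ}
    (hε : ∀ p, 1 ≤ p → b p < ε → b (p + 1) < ε → b (p + 1) = b p) (hε1 : ε ≤ 1)
    (hετ : ∀ n, 1 ≤ n → ¬ (b (n * τ) < ε ∧ b (n * τ + 1) < ε)) (hC1 : 1 ≤ C)
    (hC : ∀ A, 1 ≤ A → b A ≤ 1 → b (A + 1) ≤ C) {R : ℕ} (hR : 1 ≤ R) :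
    ε / C ≤ max (b R) (b (R + 1)) := by
  by_contra! h
  have hlt : ∀ q, 1 ≤ q → b q < ε / C → b q < ε := fun q hq hq' =>
    (le_mul_of_one_le_right (hbpos q hq).le hC1).trans_lt ((lt_div_iff₀ (by positivity)).1 hq')
  have hRε : b R < ε := hlt R hR ((le_max_left _ _).trans_lt h)
  have hR1 := hε R hR hRε (hlt _ (by omega) ((le_max_right _ _).trans_lt h))
  obtain ⟨s, rfl⟩ := Nat.exists_eq_add_of_le hτ
  obtain ⟨e0, e1⟩ := eq_of_small_pair_add hbpos hmul hε hε1 hC1 hC hR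
    ((le_max_left _ _).trans_lt h) hR1 (s * R)
  rw [show R + s * R = R * (1 + s) by ring] at e0 e1
  exact hετ R hR ⟨e0 ▸ hRε, e1 ▸ hRε⟩

end Multiplicative

theorem stmt6_general {Ω : Type*} [MeasurableSpace Ω] (P : Measure Ω) [IsProbabilityMeasure P]
    (X : ℕ → Ω → ℝ)
    (b : ℕ → ℝ) (hbpos : ∀ n : ℕ, 1 ≤ n → 0 < b n) (τ : ℕ) (hτ : 1 ≤ τ)
    (hss : ∀ (n : ℕ), 1 ≤ n → ∀ (m : ℕ),
      IdentDistrib (X (n * m)) (fun ω => b n * X m ω) P P)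
    (hcsi : ∀ k m : ℕ, IdentDistrib (fun ω => X (m + 1) ω - X m ω)
      (fun ω => X (m + k * τ + 1) ω - X (m + k * τ) ω) P P)
    (hnd : P {ω | X 1 ω = 0} < 1)
    (hb1 : ¬ ∀ n : ℕ, 1 ≤ n → b n = 1) :
    ∀ m : ℕ, 1 ≤ m → ∃ d : ℝ, 0 < d ∧ ∀ n : ℕ, 1 ≤ n →
      d ≤ max (b (n * τ)) (b (n * τ + m)) := by
  have hX1 : ¬ X 1 =ᵐ[P] 0 := fun h => hnd.ne <| by
    rw [← measure_univ (μ := P)]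
    exact measure_congr (ae_eq_univ.2 (ae_iff.1 h))
  have hX : IsMarginallySelfSimilar P X b := hss
  have hmul : ∀ x y, 1 ≤ x → 1 ≤ y → b (x * y) = b x * b y := fun _ _ => hX.map_mul hbpos hX1
  obtain ⟨C, hC1, hC⟩ := hX.exists_succ_le_of_le_one hbpos hcsi hX1 hτ
  obtain ⟨ε, ⟨⟨hε, hετ⟩, hε1⟩, hε0⟩ := ((((hX.eventually_succ_eq_of_small hbpos hcsi hX1 hτ).and
    (hX.eventually_not_small_pair_mul hbpos hcsi hX1 hτ hb1)).and
    (nhdsWithin_le_nhds (eventually_le_nhds one_pos))).and self_mem_nhdsWithin).exists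
  intro m hm
  obtain ⟨d, hd, hpair⟩ := exists_small_pair hbpos hmul (by positivity) hC hm
    (div_pos (Set.mem_Ioi.1 hε0) (by positivity))
  refine ⟨d, hd, fun n hn => ?_⟩
  by_contra! h
  obtain ⟨R, hR, h0, h1⟩ := hpair (n * τ) (Nat.one_le_iff_ne_zero.2 (by positivity))
    ((le_max_left _ _).trans_lt h) ((le_max_right _ _).trans_lt h)
  exact (div_le_max_succ hbpos hmul hτ hε hε1 hετ hC1 hC hR).not_gt (max_lt h0 h1)

/-- Corollary 2.4: if the scaling function is not identically one, then along each
residue class `max (b (nτ)) (b (nτ+m))` is bounded below away from zero. -/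
theorem stmt6 {Ω : Type*} [MeasurableSpace Ω] (P : Measure Ω) [IsProbabilityMeasure P]
    (X : ℕ → Ω → ℝ) (hXmeas : ∀ n, Measurable (X n))
    (b : ℕ → ℝ) (hbpos : ∀ n : ℕ, 1 ≤ n → 0 < b n) (τ : ℕ) (hτ : 1 ≤ τ)
    (hss : ∀ (n : ℕ), 1 ≤ n → ∀ (m : ℕ),
      IdentDistrib (X (n * m)) (fun ω => b n * X m ω) P P)
    (hcsi : ∀ k m : ℕ, IdentDistrib (fun ω => X (m + 1) ω - X m ω)
      (fun ω => X (m + k * τ + 1) ω - X (m + k * τ) ω) P P)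
    (hnd : P {ω | X 1 ω = 0} < 1)
    (hb1 : ¬ ∀ n : ℕ, 1 ≤ n → b n = 1) :
    ∀ m : ℕ, 1 ≤ m → ∃ d : ℝ, 0 < d ∧ ∀ n : ℕ, 1 ≤ n →
      d ≤ max (b (n * τ)) (b (n * τ + m)) :=
  stmt6_general P X b hbpos τ hτ hss hcsi hnd hb1
end
end

section
/- Let p be a prime, H > 0, and let X = (X_n)_{n∈ℕ₀} be a dt-ss-si process with scaling function b(n) = (|n|_p)^H. Then almost surely, for every n ∈ ℕ₀, liminf_{m→∞} |X_m − X_n| = 0; that is, almost surely each value X_n is an accumulation point of the sequence (X_m)_{m∈ℕ₀}. -/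
open MeasureTheory ProbabilityTheory Filter

noncomputable section

/-- Equality in distribution of two families of random variables: the laws of the
induced maps into the product space coincide. -/
def EqDistFam {ι Ω₁ Ω₂ E : Type*} [MeasurableSpace Ω₁] [MeasurableSpace Ω₂]
    [MeasurableSpace E]
    (P₁ : Measure Ω₁) (P₂ : Measure Ω₂) (X : ι → Ω₁ → E) (Y : ι → Ω₂ → E) : Prop :=
  Measure.map (fun ω i => X i ω) P₁ = Measure.map (fun ω i => Y i ω) P₂

/-- A discrete-time process is self-similar with scaling function `b` if for every `n ≥ 1`,
`(X (n*m))ₘ ≐ (b n • X m)ₘ`. -/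
def SelfSimilar {Ω : Type*} [MeasurableSpace Ω] (P : Measure Ω) (X : ℕ → Ω → ℝ)
    (b : ℕ → ℝ) : Prop :=
  ∀ n : ℕ, 1 ≤ n → EqDistFam P P (fun m ω => X (n * m) ω) (fun m ω => b n * X m ω)

/-- A discrete-time process has stationary increments if for every `k ≥ 1`,
`(X (m+1) - X m)ₘ ≐ (X (m+k+1) - X (m+k))ₘ`. -/
def StationaryIncrements {Ω : Type*} [MeasurableSpace Ω] (P : Measure Ω)
    (X : ℕ → Ω → ℝ) : Prop :=
  ∀ k : ℕ, 1 ≤ k → EqDistFam P P (fun m ω => X (m + 1) ω - X m ω)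
    (fun m ω => X (m + k + 1) ω - X (m + k) ω)

/-!
Stationarity of increments gives `X (n + p^k) - X n ≐ X (p^k) - X 0`, and self-similarity applied
jointly at times `0` and `1` gives `X (p^k) - X 0 ≐ p^(-kH) • (X 1 - X 0)`, which tends to `0`.
Hence `X (n + p^k) → X n` in probability as `k → ∞`, so almost surely along a subsequence of times
tending to infinity, and `X n` is an accumulation point of the path.
-/

open Topology

lemma EqDistFam.identDistrib {ι Ω₁ Ω₂ E : Type*} [MeasurableSpace Ω₁] [MeasurableSpace Ω₂]
    [MeasurableSpace E] {P₁ : Measure Ω₁} {P₂ : Measure Ω₂} {X : ι → Ω₁ → E} {Y : ι → Ω₂ → E}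
    (h : EqDistFam P₁ P₂ X Y) (hX : ∀ i, Measurable (X i)) (hY : ∀ i, Measurable (Y i)) :
    IdentDistrib (fun ω i => X i ω) (fun ω i => Y i ω) P₁ P₂ :=
  ⟨(measurable_pi_lambda _ hX).aemeasurable, (measurable_pi_lambda _ hY).aemeasurable, h⟩

section

variable {Ω : Type*} [MeasurableSpace Ω] {P : Measure Ω} {X : ℕ → Ω → ℝ}

lemma StationaryIncrements.identDistrib_sub (hsi : StationaryIncrements P X)
    (hX : ∀ n, Measurable (X n)) (n m : ℕ) :
    IdentDistrib (fun ω => X (n + m) ω - X n ω) (fun ω => X m ω - X 0 ω) P P := by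
  rcases Nat.eq_zero_or_pos n with rfl | hn
  · simp only [zero_add]
    exact IdentDistrib.refl ((hX m).sub (hX 0)).aemeasurable
  have hsum : Measurable fun y : ℕ → ℝ => ∑ i ∈ Finset.range m, y i :=
    Finset.measurable_sum _ fun i _ => measurable_pi_apply i
  have := ((hsi n hn).identDistrib (fun _ => (hX _).sub (hX _))
    (fun _ => (hX _).sub (hX _))).comp hsum
  convert this.symm using 1 <;> funext ω
  · have := Finset.sum_range_sub (fun i => X (i + n) ω) m
    simp only [zero_add, add_right_comm _ 1 n] at this
    rw [Function.comp_apply, this, add_comm]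
  · exact (Finset.sum_range_sub (fun i => X i ω) m).symm

lemma SelfSimilar.identDistrib_sub {b : ℕ → ℝ} (hss : SelfSimilar P X b)
    (hX : ∀ n, Measurable (X n)) {n : ℕ} (hn : 1 ≤ n) :
    IdentDistrib (fun ω => X n ω - X 0 ω) (fun ω => b n * (X 1 ω - X 0 ω)) P P := by
  have := ((hss n hn).identDistrib (fun _ => hX _) (fun _ => (hX _).const_mul _)).comp
    (u := fun y => y 1 - y 0) (by fun_prop)
  convert this using 1 <;> funext ω
  · simp
  · simp [mul_sub]

end

lemma MeasureTheory.TendstoInMeasure.of_identDistrib {ι α β E : Type*} [MeasurableSpace α]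
    [MeasurableSpace β] [PseudoEMetricSpace E] [MeasurableSpace E] [OpensMeasurableSpace E]
    {μ : Measure α} {ν : Measure β} {f : ι → α → E} {g : ι → β → E} {l : Filter ι} {c : E}
    (hg : TendstoInMeasure ν g l fun _ => c) (hfg : ∀ i, IdentDistrib (f i) (g i) μ ν) :
    TendstoInMeasure μ f l fun _ => c := by
  intro ε hε
  convert hg ε hε using 2 with i
  exact (hfg i).measure_mem_eq (measurableSet_le measurable_const measurable_edist_left)

lemma MeasureTheory.tendstoInMeasure_const_mul {α : Type*} [MeasurableSpace α] {μ : Measure α}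
    [IsFiniteMeasure μ] {c : ℕ → ℝ} (hc : Tendsto c atTop (𝓝 0)) {Y : α → ℝ}
    (hY : AEStronglyMeasurable Y μ) :
    TendstoInMeasure μ (fun k ω => c k * Y ω) atTop fun _ => 0 :=
  tendstoInMeasure_of_tendsto_ae (fun _ => hY.const_mul _) <|
    .of_forall fun ω => by simpa using hc.mul_const (Y ω)

lemma padicNormNat_prime_pow {p : ℕ} (hp : p.Prime) (k : ℕ) :
    padicNormNat p (p ^ k) = ((p : ℝ) ^ k)⁻¹ := by
  have : Fact p.Prime := ⟨hp⟩
  simp [padicNormNat, IsAbsoluteValue.abv_pow (padicNorm p)]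

lemma tendsto_padicNormNat_prime_pow_rpow {p : ℕ} (hp : p.Prime) {H : ℝ} (hH : 0 < H) :
    Tendsto (fun k => padicNormNat p (p ^ k) ^ H) atTop (𝓝 0) := by
  have h := (tendsto_inv_atTop_zero.comp
    (tendsto_pow_atTop_atTop_of_one_lt (Nat.one_lt_cast.2 hp.one_lt))).rpow_const
    (p := H) (.inr hH.le)
  simpa [Function.comp_def, padicNormNat_prime_pow hp, Real.zero_rpow hH.ne'] using h

lemma liminf_eq_zero_of_tendsto_comp {u : ℕ → ℝ} (hu : ∀ m, 0 ≤ u m) {φ : ℕ → ℕ}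
    (hφ : Tendsto φ atTop atTop) (h : Tendsto (u ∘ φ) atTop (𝓝 0)) :
    liminf u atTop = 0 := by
  have hbdd : IsBoundedUnder (· ≥ ·) atTop u := isBoundedUnder_of ⟨0, hu⟩
  have hcobdd : IsCoboundedUnder (· ≥ ·) (map φ atTop) u :=
    h.isBoundedUnder_le.isCobounded_flip
  refine le_antisymm ?_ (le_liminf_of_le (hcobdd.mono (map_mono hφ)) (.of_forall hu))
  calc liminf u atTop ≤ liminf (u ∘ φ) atTop := hφ.liminf_le_liminf_comp hcobdd hbdd
    _ = 0 := h.liminf_eq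

/-- Proposition 2.6 (2): a type-II dt-ss-si process is recurrent: almost surely every
value `X n` is an accumulation point of the sequence. -/
theorem stmt8 {Ω : Type*} [MeasurableSpace Ω] (P : Measure Ω) [IsProbabilityMeasure P]
    (X : ℕ → Ω → ℝ) (hXmeas : ∀ n, Measurable (X n))
    (p : ℕ) (hp : p.Prime) (H : ℝ) (hH : 0 < H)
    (hss : SelfSimilar P X (fun n => (padicNormNat p n) ^ H))
    (hsi : StationaryIncrements P X) :
    ∀ᵐ ω ∂P, ∀ n : ℕ,
      Filter.liminf (fun m : ℕ => |X m ω - X n ω|) Filter.atTop = 0 := by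
  have hjump : ∀ n, TendstoInMeasure P (fun k ω => X (n + p ^ k) ω - X n ω) atTop fun _ => 0 :=
    fun n => (tendstoInMeasure_const_mul (tendsto_padicNormNat_prime_pow_rpow hp hH)
      ((hXmeas 1).sub (hXmeas 0)).aestronglyMeasurable).of_identDistrib fun k =>
        (hsi.identDistrib_sub hXmeas n (p ^ k)).trans
          (hss.identDistrib_sub hXmeas (Nat.one_le_pow _ _ hp.pos))
  rw [ae_all_iff]
  intro n
  obtain ⟨ns, hns, hae⟩ := (hjump n).exists_seq_tendsto_ae
  filter_upwards [hae] with ω hω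
  refine liminf_eq_zero_of_tendsto_comp (fun m => abs_nonneg _) (φ := fun k => n + p ^ ns k)
    ?_ (by simpa [Function.comp_def] using hω.abs)
  exact tendsto_atTop_mono (fun k => Nat.le_add_left _ _)
    ((tendsto_pow_atTop_atTop_of_one_lt hp.one_lt).comp hns.tendsto_atTop)
end
end
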